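/- arXiv:1006.2610 — 5 statements merged into one kernel-verified Lean document; each statement's English description precedes it below -/
import Mathlib

section
/- Let K be an algebraic closure of F_p. A point (x₀, y₀) ∈ K² is a singular point of f (that is, f and both partial derivatives f_x, f_y vanish at (x₀,y₀)) if and only if (x₀+1)^{m−1} = x₀^{m−1} = y₀^{m−1} = (y₀+1)^{m−1}. In particular at every singular point x₀, y₀ ∉ {0, −1}. -/
/-!
Since `m ≡ 1 (mod p)`, the partial derivatives of `f` are `(x+1)^(m-1) - x^(m-1)` and
`-((y+1)^(m-1) - y^(m-1))`. Once they vanish, `(x+1)^m - x^m = (x+1)·x^(m-1) - x·x^(m-1) = x^(m-1)`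
and likewise in `y`, so `f` itself reduces to `x^(m-1) - y^(m-1)`. Finally `(x+1)^(m-1) = x^(m-1)`
rules out `x = 0` and `x = -1`, as one side is then zero and the other a unit.
-/

open MvPolynomial

/-- `f(x,y) = (x+1)^m - x^m - (y+1)^m + y^m` in `F_p[x,y]`. -/
noncomputable def fpoly (p m : ℕ) : MvPolynomial (Fin 2) (ZMod p) :=
  (X 0 + 1) ^ m - X 0 ^ m - (X 1 + 1) ^ m + X 1 ^ m

/-- The polynomial `g(X + a, Y + b)`, i.e. `g` translated so that `(a,b)` becomes the
origin. -/
noncomputable def shiftAt {K : Type*} [CommRing K] (g : MvPolynomial (Fin 2) K) (a b : K) :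
    MvPolynomial (Fin 2) K :=
  MvPolynomial.aeval (fun i : Fin 2 => MvPolynomial.X i + MvPolynomial.C (![a, b] i)) g

/-- The multiplicity of `g` at the point `(a,b)` : the least `n` such that the homogeneous
component of degree `n` of `g(X+a, Y+b)` is nonzero. -/
noncomputable def multAt {K : Type*} [CommRing K] (g : MvPolynomial (Fin 2) K) (a b : K) : ℕ :=
  sInf {n : ℕ | MvPolynomial.homogeneousComponent n (shiftAt g a b) ≠ 0}

/-- `(a,b)` is a singular point of `g` : `g` and both its partial derivatives
vanish at `(a,b)`. -/
def IsSingAt {K : Type*} [CommRing K] (g : MvPolynomial (Fin 2) K) (a b : K) : Prop :=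
  MvPolynomial.eval ![a, b] g = 0 ∧
  MvPolynomial.eval ![a, b] (MvPolynomial.pderiv 0 g) = 0 ∧
  MvPolynomial.eval ![a, b] (MvPolynomial.pderiv 1 g) = 0

/-- Base change of a two-variable polynomial over `F_p` to the algebraic closure. -/
noncomputable def toK (p : ℕ) [Fact p.Prime] (g : MvPolynomial (Fin 2) (ZMod p)) :
    MvPolynomial (Fin 2) (AlgebraicClosure (ZMod p)) :=
  MvPolynomial.map (algebraMap (ZMod p) (AlgebraicClosure (ZMod p))) g

section Ring

variable {R : Type*} [CommRing R]

theorem add_one_pow_succ_sub_pow_succ {a : R} {n : ℕ} (h : (a + 1) ^ n = a ^ n) :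
    (a + 1) ^ (n + 1) - a ^ (n + 1) = a ^ n := by
  linear_combination (a + 1) * h

theorem add_one_pow_succ_sub_pow_succ_sub_eq_zero_iff {a b : R} {n : ℕ}
    (ha : (a + 1) ^ n = a ^ n) (hb : (b + 1) ^ n = b ^ n) :
    (a + 1) ^ (n + 1) - a ^ (n + 1) - (b + 1) ^ (n + 1) + b ^ (n + 1) = 0 ↔ a ^ n = b ^ n := by
  rw [← sub_eq_zero (a := a ^ n), ← add_one_pow_succ_sub_pow_succ ha,
    ← add_one_pow_succ_sub_pow_succ hb]
  ring_nf

theorem ne_zero_and_ne_neg_one_of_add_one_pow_eq_pow [Nontrivial R] {a : R} {n : ℕ}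
    (hn : n ≠ 0) (h : (a + 1) ^ n = a ^ n) : a ≠ 0 ∧ a ≠ -1 := by
  constructor
  · rintro rfl
    simp [zero_pow hn] at h
  · rintro rfl
    rw [neg_add_cancel, zero_pow hn] at h
    exact ((isUnit_neg_one.pow n).ne_zero h.symm).elim

theorem natCast_eq_one_of_modEq {p m : ℕ} (φ : ZMod p →+* R) (h : m ≡ 1 [MOD p]) :
    (m : R) = 1 := by
  rw [← map_natCast φ, (ZMod.natCast_eq_natCast_iff m 1 p).mpr h, Nat.cast_one, map_one]

end Ring

section Evaluation

variable {R : Type*} [CommRing R] {p : ℕ} (φ : ZMod p →+* R) (m : ℕ) (a b : R)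

theorem eval_map_fpoly :
    eval ![a, b] (map φ (fpoly p m)) = (a + 1) ^ m - a ^ m - (b + 1) ^ m + b ^ m := by
  simp [fpoly]

theorem eval_pderiv_zero_map_fpoly :
    eval ![a, b] (pderiv 0 (map φ (fpoly p m))) = m * ((a + 1) ^ (m - 1) - a ^ (m - 1)) := by
  simp [fpoly]
  ring

theorem eval_pderiv_one_map_fpoly :
    eval ![a, b] (pderiv 1 (map φ (fpoly p m))) = -(m * ((b + 1) ^ (m - 1) - b ^ (m - 1))) := by
  simp [fpoly]
  ring

theorem isSingAt_map_fpoly_iff (hm : m ≡ 1 [MOD p]) :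
    IsSingAt (map φ (fpoly p m)) a b ↔
      (a + 1) ^ m - a ^ m - (b + 1) ^ m + b ^ m = 0 ∧
        (a + 1) ^ (m - 1) = a ^ (m - 1) ∧ (b + 1) ^ (m - 1) = b ^ (m - 1) := by
  rw [IsSingAt, eval_map_fpoly, eval_pderiv_zero_map_fpoly, eval_pderiv_one_map_fpoly,
    natCast_eq_one_of_modEq φ hm, one_mul, one_mul, neg_eq_zero, sub_eq_zero, sub_eq_zero]

end Evaluation

theorem stmt8_general (p : ℕ) [Fact p.Prime]
    (m : ℕ) (hm : 3 ≤ m) (hm1 : m ≡ 1 [MOD p]) :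
    (∀ x0 y0 : AlgebraicClosure (ZMod p),
      IsSingAt (toK p (fpoly p m)) x0 y0 ↔
        ((x0 + 1) ^ (m - 1) = x0 ^ (m - 1) ∧ x0 ^ (m - 1) = y0 ^ (m - 1) ∧
          y0 ^ (m - 1) = (y0 + 1) ^ (m - 1))) ∧
    (∀ x0 y0 : AlgebraicClosure (ZMod p),
      IsSingAt (toK p (fpoly p m)) x0 y0 →
        x0 ≠ 0 ∧ x0 ≠ -1 ∧ y0 ≠ 0 ∧ y0 ≠ -1) := by
  have hsing := isSingAt_map_fpoly_iff (algebraMap (ZMod p) (AlgebraicClosure (ZMod p))) m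
  obtain ⟨n, rfl⟩ : ∃ n, m = n + 1 := ⟨m - 1, by omega⟩
  simp only [Nat.add_sub_cancel] at hsing ⊢
  refine ⟨fun x0 y0 => ?_, fun x0 y0 h => ?_⟩
  · rw [toK, hsing x0 y0 hm1]
    constructor
    · rintro ⟨hf, hx, hy⟩
      exact ⟨hx, (add_one_pow_succ_sub_pow_succ_sub_eq_zero_iff hx hy).mp hf, hy.symm⟩
    · rintro ⟨hx, hxy, hy⟩
      exact ⟨(add_one_pow_succ_sub_pow_succ_sub_eq_zero_iff hx hy.symm).mpr hxy, hx, hy.symm⟩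
  · obtain ⟨-, hx, hy⟩ := (hsing x0 y0 hm1).mp h
    have hn : n ≠ 0 := by omega
    obtain ⟨hx0, hx1⟩ := ne_zero_and_ne_neg_one_of_add_one_pow_eq_pow hn hx
    obtain ⟨hy0, hy1⟩ := ne_zero_and_ne_neg_one_of_add_one_pow_eq_pow hn hy
    exact ⟨hx0, hx1, hy0, hy1⟩

/-- A point `(x₀,y₀)` over the algebraic closure `K` of `F_p` is a singular point of `f`
iff `(x₀+1)^{m-1} = x₀^{m-1} = y₀^{m-1} = (y₀+1)^{m-1}`; in particular at every singular
point `x₀, y₀ ∉ {0, -1}`. -/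
theorem stmt8 (p : ℕ) [Fact p.Prime] (hp : Odd p)
    (m : ℕ) (hm : 3 ≤ m) (hm1 : m ≡ 1 [MOD p]) :
    (∀ x0 y0 : AlgebraicClosure (ZMod p),
      IsSingAt (toK p (fpoly p m)) x0 y0 ↔
        ((x0 + 1) ^ (m - 1) = x0 ^ (m - 1) ∧ x0 ^ (m - 1) = y0 ^ (m - 1) ∧
          y0 ^ (m - 1) = (y0 + 1) ^ (m - 1))) ∧
    (∀ x0 y0 : AlgebraicClosure (ZMod p),
      IsSingAt (toK p (fpoly p m)) x0 y0 →
        x0 ≠ 0 ∧ x0 ≠ -1 ∧ y0 ≠ 0 ∧ y0 ≠ -1) :=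
  stmt8_general p m hm hm1
end

section
/- Write m − 1 = Σ_{j=1}^b m_j p^{i_j} with 1 ≤ m_j ≤ p−1 and l = i_1 < i_2 < … < i_b (the base-p expansion of m−1), and set k = (m−1)/p^l. Then the number of points (x₀,y₀) in K², K an algebraic closure of F_p, that are singular points of h is at most (k − 1)·(2k − (m_b + 1)·p^{i_b − l}). -/
open MvPolynomial

/-!
At a singular point `(x, y)` of `h`, differentiating `f = (x - y) h` and using `m = 1` in
characteristic `p` gives `(x+1)^(m-1) = x^(m-1)`, `(y+1)^(m-1) = y^(m-1)` and
`x^(m-1) = y^(m-1)`; since `m - 1 = k p^l` and Frobenius is injective, `m - 1` may be replaced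
by `k`. So `x` is one of the at most `k - 1` roots of `(X+1)^k - X^k`, and for fixed `x` it
remains to count the roots `y` with `y^k = x^k`. Put `ξ = 1 + 1/y`: then `ξ^k = 1` and
`(ξ - 1)^k = x^(-k)`. Splitting off the top digit, `k = N q + r` with `q = p^(i_b - l)`, the
Frobenius identity `(ξ - 1)^(N q) = (ξ^q - 1)^N` together with `ξ^(N q) = ξ^(-r)` makes `ξ` a
root of a nonzero polynomial of degree at most `2 r + (N - 1) q = 2 k - (N + 1) q`.
-/

namespace Polynomial

section CommRing

variable {R : Type*} [CommRing R]

theorem card_le_natDegree_of_forall_isRoot [IsDomain R] {f : R[X]} (hf : f ≠ 0) {T : Finset R}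
    (hT : ∀ x ∈ T, f.IsRoot x) : T.card ≤ f.natDegree :=
  card_le_degree_of_subset_roots fun x hx => (mem_roots hf).2 (hT x hx)

theorem natDegree_add_one_pow_sub_pow_le (f : R[X]) (n : ℕ) :
    ((f + 1) ^ n - f ^ n).natDegree ≤ (n - 1) * f.natDegree := by
  rw [add_pow, Finset.sum_range_succ, one_pow, mul_one, Nat.choose_self, Nat.cast_one, mul_one,
    add_sub_cancel_right]
  refine natDegree_sum_le_of_forall_le _ _ fun i hi => ?_
  have hin : i ≤ n - 1 := by have := Finset.mem_range.1 hi; omega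
  rw [one_pow, mul_one]
  refine (natDegree_mul_le_of_le (natDegree_pow_le_of_le i le_rfl)
    (natDegree_natCast _).le).trans ?_
  rw [add_zero]
  exact Nat.mul_le_mul_right _ hin

theorem X_add_one_pow_sub_X_pow_ne_zero [Nontrivial R] {k : ℕ} (hk : k ≠ 0) :
    ((X + 1) ^ k - X ^ k : R[X]) ≠ 0 := fun h => by
  simpa [zero_pow hk] using congrArg (eval 0) h

/-- Obtained from `(ξ ^ q - 1) ^ N * (ξ - 1) ^ r = c` by eliminating `ξ ^ (N * q) = ξ ^ (-r)`. -/
noncomputable def fiberPoly (N q r : ℕ) (c : R) : R[X] :=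
  (X ^ r * ((X ^ q - 1) ^ N - (X ^ q) ^ N) + 1) * (X - 1) ^ r - C c * X ^ r

variable {N q r : ℕ} (c : R)

theorem fiberPoly_ne_zero [Nontrivial R] (hr : r ≠ 0) : fiberPoly N q r c ≠ 0 := fun h =>
  (isUnit_one.neg.pow r).ne_zero <| by simpa [fiberPoly, zero_pow hr] using congrArg (eval 0) h

theorem natDegree_fiberPoly_le : (fiberPoly N q r c).natDegree ≤ 2 * r + (N - 1) * q := by
  have hXq : (X ^ q - 1 : R[X]).natDegree ≤ q :=
    (natDegree_sub_le_of_le (natDegree_X_pow_le q) natDegree_one.le).trans (by simp)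
  have hG : ((X ^ q - 1) ^ N - (X ^ q) ^ N : R[X]).natDegree ≤ (N - 1) * q := by
    have := natDegree_add_one_pow_sub_pow_le (X ^ q - 1 : R[X]) N
    rw [sub_add_cancel] at this
    rw [← neg_sub, natDegree_neg]
    exact this.trans (Nat.mul_le_mul_left _ hXq)
  have hB : (X ^ r * ((X ^ q - 1) ^ N - (X ^ q) ^ N) + 1 : R[X]).natDegree ≤
      r + (N - 1) * q :=
    natDegree_add_le_of_degree_le (natDegree_mul_le_of_le (natDegree_X_pow_le r) hG)
      (natDegree_one.trans_le (Nat.zero_le _))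
  have hP : ((X - 1) ^ r : R[X]).natDegree ≤ r := by
    simpa using natDegree_pow_le_of_le r (natDegree_X_sub_C_le (1 : R))
  refine (natDegree_sub_le_of_le (natDegree_mul_le_of_le hB hP)
    ((natDegree_C_mul_le c _).trans (natDegree_X_pow_le r))).trans ?_
  omega

theorem isRoot_fiberPoly (p : ℕ) [ExpChar R p] {e : ℕ} {ξ : R}
    (h1 : ξ ^ (N * p ^ e + r) = 1) (hc : (ξ - 1) ^ (N * p ^ e + r) = c) :
    (fiberPoly N (p ^ e) r c).IsRoot ξ := by
  rw [pow_add, mul_comm N, pow_mul] at h1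
  rw [pow_add, mul_comm N, pow_mul, sub_pow_expChar_pow, one_pow] at hc
  simp only [fiberPoly, IsRoot, eval_sub, eval_mul, eval_add, eval_pow, eval_X, eval_one, eval_C]
  linear_combination ξ ^ r * hc - (ξ - 1) ^ r * h1

end CommRing

end Polynomial

section Field

variable {K : Type*} [Field K]

theorem card_le_of_add_one_pow_eq_pow {k : ℕ} (hk : k ≠ 0) {T : Finset K}
    (hT : ∀ y ∈ T, (y + 1) ^ k = y ^ k) : T.card ≤ k - 1 := by
  refine (Polynomial.card_le_natDegree_of_forall_isRoot
    (Polynomial.X_add_one_pow_sub_X_pow_ne_zero hk) fun y hy => ?_).trans ?_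
  · simp [hT y hy]
  · simpa using Polynomial.natDegree_add_one_pow_sub_pow_le (Polynomial.X : Polynomial K) k

theorem card_le_of_add_one_pow_eq_pow_of_pow_eq (p : ℕ) [ExpChar K p] {N e r : ℕ} (hN : N ≠ 0)
    (hr : r = 0 → e = 0) (a : K) {T : Finset K}
    (hT : ∀ y ∈ T, (y + 1) ^ (N * p ^ e + r) = y ^ (N * p ^ e + r) ∧
      y ^ (N * p ^ e + r) = a ^ (N * p ^ e + r)) :
    T.card ≤ 2 * r + (N - 1) * p ^ e := by
  classical
  rcases eq_or_ne r 0 with rfl | hr0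
  · obtain rfl := hr rfl
    simp only [pow_zero, mul_one, add_zero] at hT ⊢
    exact (card_le_of_add_one_pow_eq_pow hN fun y hy => (hT y hy).1).trans (by omega)
  have hy0 : ∀ y ∈ T, y ≠ 0 := by
    rintro y hy rfl
    simpa [zero_pow (show N * p ^ e + r ≠ 0 by omega)] using (hT 0 hy).1
  rw [← Finset.card_image_of_injOn (f := fun y : K => 1 + y⁻¹)
    fun y₁ _ y₂ _ h => inv_injective (add_left_cancel h)]
  refine (Polynomial.card_le_natDegree_of_forall_isRoot
    (Polynomial.fiberPoly_ne_zero (N := N) (q := p ^ e) (a ^ (N * p ^ e + r))⁻¹ hr0) ?_).trans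
    (Polynomial.natDegree_fiberPoly_le _)
  simp only [Finset.mem_image]
  rintro _ ⟨y, hy, rfl⟩
  obtain ⟨hconsec, hpow⟩ := hT y hy
  have hy : y ≠ 0 := hy0 y hy
  refine Polynomial.isRoot_fiberPoly _ p ?_ (by rw [add_sub_cancel_left, inv_pow, hpow])
  rw [show 1 + y⁻¹ = (y + 1) / y by field_simp, div_pow, hconsec, div_self (pow_ne_zero _ hy)]

theorem finite_and_ncard_le_of_forall_add_one_pow_eq_pow {k D : ℕ} (hk : k ≠ 0)
    (hfib : ∀ (a : K) (T : Finset K), (∀ y ∈ T, (y + 1) ^ k = y ^ k ∧ y ^ k = a ^ k) →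
      T.card ≤ D)
    {Z : Set (K × K)}
    (hZ : ∀ t ∈ Z, (t.1 + 1) ^ k = t.1 ^ k ∧ (t.2 + 1) ^ k = t.2 ^ k ∧ t.1 ^ k = t.2 ^ k) :
    Z.Finite ∧ Z.ncard ≤ (k - 1) * D := by
  classical
  set S := ((Polynomial.X + 1) ^ k - Polynomial.X ^ k : Polynomial K).roots.toFinset
  have hS : ∀ y, y ∈ S ↔ (y + 1) ^ k = y ^ k := fun y => by
    simp [S, Polynomial.mem_roots (Polynomial.X_add_one_pow_sub_X_pow_ne_zero hk), sub_eq_zero]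
  set F := (S ×ˢ S).filter fun t => t.1 ^ k = t.2 ^ k
  have hZF : Z ⊆ F := fun t ht => by
    obtain ⟨h1, h2, h12⟩ := hZ t ht
    simp [F, hS, h1, h2, h12]
  refine ⟨F.finite_toSet.subset hZF, (Set.ncard_le_ncard hZF F.finite_toSet).trans ?_⟩
  rw [Set.ncard_coe_finset]
  refine (Finset.card_le_mul_card_image_of_maps_to (f := Prod.fst) (t := S)
    (fun t ht => (Finset.mem_product.1 (Finset.mem_filter.1 ht).1).1) D fun a ha => ?_).trans ?_
  · rw [← Finset.card_image_of_injOn (f := Prod.snd) fun t₁ h₁ t₂ h₂ h => Prod.ext (by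
      simp only [Finset.coe_filter, Set.mem_ofPred_eq] at h₁ h₂; rw [h₁.2, h₂.2]) h]
    refine hfib a _ fun y hy => ?_
    simp only [Finset.mem_image, Finset.mem_filter, Finset.mem_product] at hy
    obtain ⟨⟨x, y'⟩, ⟨⟨⟨-, hy⟩, hxy⟩, rfl⟩, rfl⟩ := hy
    exact ⟨(hS _).1 hy, hxy.symm⟩
  · rw [mul_comm]
    exact Nat.mul_le_mul_right _ (card_le_of_add_one_pow_eq_pow hk fun y hy => (hS y).1 hy)

end Field

theorem pow_eq_pow_of_pow_mul_pow_eq {R : Type*} [CommRing R] [IsReduced R] (p : ℕ) [ExpChar R p]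
    {k l : ℕ} {u v : R} (h : u ^ (k * p ^ l) = v ^ (k * p ^ l)) : u ^ k = v ^ k :=
  iterateFrobenius_inj R p l <| by simpa only [iterateFrobenius_def, ← pow_mul] using h

theorem IsSingAt.add_one_pow_eq_pow {K : Type*} [CommRing K] {n : ℕ} (hn : (n : K) = 0)
    {H : MvPolynomial (Fin 2) K}
    (hH : (X 0 + 1) ^ (n + 1) - X 0 ^ (n + 1) - (X 1 + 1) ^ (n + 1) + X 1 ^ (n + 1) =
      (X 0 - X 1) * H)
    {x y : K} (hs : IsSingAt H x y) :
    (x + 1) ^ n = x ^ n ∧ (y + 1) ^ n = y ^ n ∧ x ^ n = y ^ n := by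
  obtain ⟨h0, h1, h2⟩ := hs
  have hev : (x + 1) ^ (n + 1) - x ^ (n + 1) - (y + 1) ^ (n + 1) + y ^ (n + 1) = 0 := by
    simpa [h0] using congrArg (MvPolynomial.eval ![x, y]) hH
  have hx : (x + 1) ^ n = x ^ n := by
    simpa [h0, h1, hn, sub_eq_zero] using
      congrArg (fun g => MvPolynomial.eval ![x, y] (pderiv 0 g)) hH
  have hy : (y + 1) ^ n = y ^ n := by
    simpa [h0, h2, hn, neg_add_eq_zero] using
      congrArg (fun g => MvPolynomial.eval ![x, y] (pderiv 1 g)) hH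
  exact ⟨hx, hy, by linear_combination hev - (x + 1) * hx + (y + 1) * hy⟩

theorem IsSingAt.add_one_pow_eq_pow_of_fpoly {p : ℕ} [Fact p.Prime] {k l : ℕ}
    (hp : p ∣ k * p ^ l) {h : MvPolynomial (Fin 2) (ZMod p)}
    (hfh : fpoly p (k * p ^ l + 1) = (X 0 - X 1) * h) {x y : AlgebraicClosure (ZMod p)}
    (hs : IsSingAt (toK p h) x y) :
    (x + 1) ^ k = x ^ k ∧ (y + 1) ^ k = y ^ k ∧ x ^ k = y ^ k := by
  have hH := congrArg (MvPolynomial.map (algebraMap (ZMod p) (AlgebraicClosure (ZMod p)))) hfh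
  simp only [fpoly, map_add, map_sub, map_mul, map_pow, map_X, map_one] at hH
  obtain ⟨hx, hy, hxy⟩ := hs.add_one_pow_eq_pow ((CharP.cast_eq_zero_iff _ p _).2 hp) hH
  exact ⟨pow_eq_pow_of_pow_mul_pow_eq p hx, pow_eq_pow_of_pow_mul_pow_eq p hy,
    pow_eq_pow_of_pow_mul_pow_eq p hxy⟩

theorem Finset.sum_mul_pow_sub_mul_pow {ι : Type*} (s : Finset ι) (c e : ι → ℕ) {p l : ℕ}
    (hl : ∀ j ∈ s, l ≤ e j) :
    (∑ j ∈ s, c j * p ^ (e j - l)) * p ^ l = ∑ j ∈ s, c j * p ^ e j := by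
  rw [Finset.sum_mul]
  refine Finset.sum_congr rfl fun j hj => ?_
  rw [mul_assoc, ← pow_add, Nat.sub_add_cancel (hl j hj)]

/-- Write `m - 1 = Σ_{j=1}^b m_j p^{i_j}` (base-`p` expansion, `i_1 = l`), and set
`k = (m-1)/p^l`.  Then `h` (defined by `f = (x-y)·h`) has at most
`(k-1)·(2k - (m_b+1)·p^{i_b - l})` singular points over the algebraic closure of `F_p`. -/
theorem stmt9 (p : ℕ) [Fact p.Prime]
    (m l : ℕ) (hm : 3 ≤ m) (hm1 : m ≡ 1 [MOD p])
    (h : MvPolynomial (Fin 2) (ZMod p))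
    (hfh : fpoly p m = (X 0 - X 1) * h)
    (b : ℕ) (hb : 0 < b) (mj ij : Fin b → ℕ)
    (hmj : ∀ j, 1 ≤ mj j ∧ mj j ≤ p - 1)
    (hij : StrictMono ij) (hij0 : ij ⟨0, hb⟩ = l)
    (hexp : m - 1 = ∑ j, mj j * p ^ (ij j)) :
    {t : AlgebraicClosure (ZMod p) × AlgebraicClosure (ZMod p) |
        IsSingAt (toK p h) t.1 t.2}.Finite ∧
    ({t : AlgebraicClosure (ZMod p) × AlgebraicClosure (ZMod p) |
        IsSingAt (toK p h) t.1 t.2}.ncard : ℤ) ≤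
      ((m - 1) / p ^ l - 1) *
        (2 * ((m - 1) / p ^ l) - (mj ⟨b - 1, by omega⟩ + 1) * p ^ (ij ⟨b - 1, by omega⟩ - l)) := by
  set jb : Fin b := ⟨b - 1, by omega⟩
  set r := ∑ j ∈ Finset.univ.erase jb, mj j * p ^ (ij j - l)
  set k := mj jb * p ^ (ij jb - l) + r
  have hmk : m - 1 = k * p ^ l := by
    have hl : ∀ j ∈ Finset.univ, l ≤ ij j := fun j _ =>
      hij0 ▸ hij.monotone (Fin.le_def.2 (Nat.zero_le _))
    rw [hexp, ← Finset.sum_mul_pow_sub_mul_pow _ _ _ hl]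
    exact congrArg (· * p ^ l) (Finset.add_sum_erase _ (fun j => mj j * p ^ (ij j - l))
      (Finset.mem_univ jb)).symm
  have hk : k ≠ 0 := fun hk0 => by simp only [hk0, zero_mul] at hmk; omega
  -- `r = 0` forces `b = 1`, so the only digit sits at `p ^ l`
  have htop : r = 0 → ij jb - l = 0 := fun hr => by
    have hjb : jb = ⟨0, hb⟩ := by
      by_contra hne
      have := Finset.sum_eq_zero_iff.1 hr ⟨0, hb⟩ (by simpa using Ne.symm hne)
      have := (hmj ⟨0, hb⟩).1
      simp_all
    simp [hjb, hij0]
  rw [show m = k * p ^ l + 1 by omega] at hfh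
  obtain ⟨hfin, hcard⟩ := finite_and_ncard_le_of_forall_add_one_pow_eq_pow hk
    (fun a T hT => card_le_of_add_one_pow_eq_pow_of_pow_eq p
      (Nat.one_le_iff_ne_zero.1 (hmj jb).1) htop a hT)
    (fun _ hs => IsSingAt.add_one_pow_eq_pow_of_fpoly
      (hmk ▸ (Nat.modEq_iff_dvd' (by omega)).1 hm1.symm) hfh hs)
  refine ⟨hfin, ?_⟩
  have hmkZ : (m : ℤ) - 1 = k * p ^ l := by zify [show 1 ≤ m by omega] at hmk; exact hmk
  rw [hmkZ, Int.mul_ediv_cancel _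
    (pow_ne_zero _ (by exact_mod_cast (Fact.out : p.Prime).ne_zero))]
  calc _ ≤ (((k - 1) * (2 * r + (mj jb - 1) * p ^ (ij jb - l)) : ℕ) : ℤ) := by
        exact_mod_cast hcard
    _ = _ := by
      push_cast [Nat.one_le_iff_ne_zero.2 hk, (hmj jb).1, k]
      ring
end

section
/- Let K be an algebraic closure of F_p. Among the singular points t = (x₀,y₀) ∈ K² of h with x₀ = y₀: (a) those with x₀ ∈ F_{p^l} \ {0} have multiplicity m_t(h) = p^l (and m_t(f) = p^l + 1), and there are at most d − 1 of them; (b) those with x₀ ∉ F_{p^l} have multiplicity m_t(h) = p^l − 1 (and m_t(f) = p^l), and there are at most (m−1)/p^l − d of them. -/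
/-!
At a diagonal point `(a, a)` the translate of `f` is `P(X) - P(Y)` with
`P(T) = (T + a + 1)^m - (T + a)^m`, whose degree-`n` part is `c_n (X^n - Y^n)` where
`c_n = ((a + 1)^(m - n) - a^(m - n)) * binom(m, n)`; and since `f = (x - y) h`, the translate of
`h` has multiplicity one less. Write `m - 1 = q u` with `q = p^l`, `p ∤ u`. In characteristic `p`,
`(T + 1)^(q u + 1) = (T + 1)(T^q + 1)^u` shows `binom(m, n) = 0` for `1 < n < q` and
`binom(m, q) = binom(m, q + 1) = u ≠ 0`. At a singular point `∂f/∂x = h = 0` gives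
`c^(q u) = 1` for `c = 1 + 1/a`, so `c_1 = 0`, `c_(q + 1) ≠ 0` (as `c ≠ 1`), and `c_q = 0` exactly
when `c^q = c`, i.e. `a ∈ F_q`. The same map `a ↦ 1 + 1/a` is injective and sends the points of
type (a) to `d`-th roots of unity other than `1`, and those of type (b) to `u`-th roots of unity
that are not `d`-th roots.
-/

open MvPolynomial

theorem MvPolynomial.homogeneousComponent_add_mul_of_isHomogeneous {σ R : Type*}
    [CommSemiring R] {φ : MvPolynomial σ R} {k : ℕ} (hφ : φ.IsHomogeneous k)
    (ψ : MvPolynomial σ R) (n : ℕ) :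
    homogeneousComponent (n + k) (φ * ψ) = φ * homogeneousComponent n ψ := by
  induction ψ using MvPolynomial.induction_on' with
  | monomial d c =>
    have hd : (monomial d c).IsHomogeneous d.degree := isHomogeneous_monomial c rfl
    rw [homogeneousComponent_of_mem ((mem_homogeneousSubmodule _ _).2 (hφ.mul hd)),
      homogeneousComponent_of_mem ((mem_homogeneousSubmodule _ _).2 hd)]
    by_cases hn : n = d.degree
    · rw [if_pos hn, if_pos (by omega)]
    · rw [if_neg hn, if_neg (by omega), mul_zero]
  | add ψ χ hψ hχ => rw [mul_add, map_add, map_add, hψ, hχ, mul_add]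

theorem MvPolynomial.homogeneousComponent_aeval_X {σ R : Type*} [CommSemiring R]
    (φ : Polynomial R) (i : σ) (n : ℕ) :
    homogeneousComponent n (Polynomial.aeval (X i : MvPolynomial σ R) φ) =
      C (φ.coeff n) * X i ^ n := by
  induction φ using Polynomial.induction_on' with
  | add φ ψ hφ hψ => rw [map_add, map_add, Polynomial.coeff_add, map_add, add_mul, hφ, hψ]
  | monomial k c =>
    have hk : (C c * X i ^ k : MvPolynomial σ R).IsHomogeneous k :=
      isHomogeneous_C_mul_X_pow c i k
    rw [Polynomial.aeval_monomial, algebraMap_eq, Polynomial.coeff_monomial,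
      homogeneousComponent_of_mem ((mem_homogeneousSubmodule _ _).2 hk)]
    by_cases hn : n = k
    · rw [if_pos hn, if_pos hn.symm, hn]
    · rw [if_neg hn, if_neg (Ne.symm hn), map_zero, zero_mul]

section Diagonal

variable {K : Type*} [CommRing K]

noncomputable def diffXY (φ : Polynomial K) : MvPolynomial (Fin 2) K :=
  Polynomial.aeval (X 0) φ - Polynomial.aeval (X 1) φ

theorem shiftAt_diffXY (φ : Polynomial K) (a : K) :
    shiftAt (diffXY φ) a a = diffXY (Polynomial.taylor a φ) := by
  simp only [shiftAt, diffXY, map_sub, ← Polynomial.aeval_algHom_apply, Polynomial.taylor_apply,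
    Polynomial.aeval_comp]
  simp [algebraMap_eq]

theorem homogeneousComponent_diffXY (φ : Polynomial K) (n : ℕ) :
    homogeneousComponent n (diffXY φ) = C (φ.coeff n) * (X 0 ^ n - X 1 ^ n) := by
  rw [diffXY, map_sub, homogeneousComponent_aeval_X, homogeneousComponent_aeval_X, mul_sub]

theorem homogeneousComponent_diffXY_eq_zero_iff [Nontrivial K] (φ : Polynomial K) {n : ℕ}
    (hn : n ≠ 0) : homogeneousComponent n (diffXY φ) = 0 ↔ φ.coeff n = 0 := by
  refine ⟨fun h => ?_, fun h => by rw [homogeneousComponent_diffXY, h, map_zero, zero_mul]⟩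
  have hs : Finsupp.single (1 : Fin 2) n ≠ Finsupp.single 0 n := by
    rw [Ne, Finsupp.single_left_inj hn]; decide
  simpa [homogeneousComponent_diffXY, coeff_X_pow, hs] using
    congrArg (coeff (Finsupp.single 0 n)) h

theorem multAt_diffXY [Nontrivial K] (φ : Polynomial K) (a : K) :
    multAt (diffXY φ) a a = sInf {n | n ≠ 0 ∧ (Polynomial.taylor a φ).coeff n ≠ 0} := by
  rw [multAt, shiftAt_diffXY]
  congr 1
  ext n
  rcases eq_or_ne n 0 with rfl | hn
  · simp [homogeneousComponent_diffXY]
  · simp [hn, homogeneousComponent_diffXY_eq_zero_iff _ hn]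

theorem shiftAt_X_sub_X_mul (g : MvPolynomial (Fin 2) K) (a : K) :
    shiftAt ((X 0 - X 1) * g) a a = (X 0 - X 1) * shiftAt g a a := by
  simp [shiftAt]

-- `hg` rules out the junk value `sInf ∅ = 0`, e.g. for `g = 0`.
theorem multAt_X_sub_X_mul [IsDomain K] {g : MvPolynomial (Fin 2) K} {a : K}
    (hg : multAt ((X 0 - X 1) * g) a a ≠ 0) :
    multAt ((X 0 - X 1) * g) a a = multAt g a a + 1 := by
  have hXY : (X 0 - X 1 : MvPolynomial (Fin 2) K) ≠ 0 :=
    sub_ne_zero.2 fun h => absurd (X_injective h) (by decide)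
  have hhom : (X 0 - X 1 : MvPolynomial (Fin 2) K).IsHomogeneous 1 :=
    (isHomogeneous_X _ _).sub (isHomogeneous_X _ _)
  rw [multAt, ← Nat.sInf_add (n := 1) (by rw [← multAt]; omega)]
  simp only [shiftAt_X_sub_X_mul, homogeneousComponent_add_mul_of_isHomogeneous hhom, ne_eq,
    mul_eq_zero, hXY, false_or, multAt]

theorem eval_pderiv_zero_X_sub_X_mul (g : MvPolynomial (Fin 2) K) (a : K) :
    eval ![a, a] (pderiv 0 ((X 0 - X 1) * g)) = eval ![a, a] g := by
  simp [pderiv_X]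

theorem eval_pderiv_zero_diffXY (φ : Polynomial K) (a b : K) :
    eval ![a, b] (pderiv 0 (diffXY φ)) = (Polynomial.derivative φ).eval a := by
  rw [diffXY, map_sub, Derivation.map_aeval, Derivation.map_aeval, pderiv_X_self,
    pderiv_X_of_ne (by decide), smul_zero, sub_zero, smul_eq_mul, mul_one]
  have := Polynomial.aeval_algHom_apply (aeval ![a, b]) (X 0) (Polynomial.derivative φ)
  simpa [coe_aeval_eq_eval] using this.symm

end Diagonal

section CharP

variable (p : ℕ) [Fact p.Prime]

theorem cast_choose_prime_pow_mul_add_one {R : Type*} [CommRing R] [CharP R p]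
    (l u : ℕ) {n : ℕ} (hn : n ≠ 0) :
    (((p ^ l * u + 1).choose n : ℕ) : R) =
      (if p ^ l ∣ n - 1 then (u.choose ((n - 1) / p ^ l) : R) else 0) +
        if p ^ l ∣ n then (u.choose (n / p ^ l) : R) else 0 := by
  have hq : 0 < p ^ l := pow_pos (Fact.out : p.Prime).pos l
  have hfrob : ((Polynomial.X + 1 : Polynomial R) ^ (p ^ l * u + 1)) =
      (Polynomial.X + 1) * Polynomial.expand R (p ^ l) ((Polynomial.X + 1) ^ u) := by
    rw [pow_succ', pow_mul, add_pow_char_pow, one_pow, map_pow, map_add, Polynomial.expand_X,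
      map_one]
  obtain ⟨k, rfl⟩ := Nat.exists_eq_succ_of_ne_zero hn
  rw [← Polynomial.coeff_X_add_one_pow, hfrob, add_mul, one_mul, Polynomial.coeff_add,
    Polynomial.coeff_X_mul, Polynomial.coeff_expand hq, Polynomial.coeff_expand hq,
    Polynomial.coeff_X_add_one_pow, Polynomial.coeff_X_add_one_pow, Nat.succ_sub_one]

variable {R : Type*} [CommRing R] [CharP R p] {l : ℕ} (u : ℕ)

theorem cast_choose_prime_pow_mul_add_one_eq_zero {n : ℕ} (hn1 : 1 < n) (hn : n < p ^ l) :
    (((p ^ l * u + 1).choose n : ℕ) : R) = 0 := by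
  rw [cast_choose_prime_pow_mul_add_one p l u (by omega),
    if_neg fun h => (Nat.le_of_dvd (by omega) h).not_gt (by omega),
    if_neg fun h => (Nat.le_of_dvd (by omega) h).not_gt hn, add_zero]

theorem cast_choose_prime_pow_mul_add_one_prime_pow (hl : l ≠ 0) :
    (((p ^ l * u + 1).choose (p ^ l) : ℕ) : R) = u := by
  have hq : 2 ≤ p ^ l := le_trans (Fact.out : p.Prime).two_le (Nat.le_self_pow hl p)
  rw [cast_choose_prime_pow_mul_add_one p l u (by omega),
    if_neg fun h => (Nat.le_of_dvd (by omega) h).not_gt (by omega), if_pos dvd_rfl,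
    Nat.div_self (by omega), Nat.choose_one_right, zero_add]

theorem cast_choose_prime_pow_mul_add_one_prime_pow_add_one (hl : l ≠ 0) :
    (((p ^ l * u + 1).choose (p ^ l + 1) : ℕ) : R) = u := by
  have hq : 2 ≤ p ^ l := le_trans (Fact.out : p.Prime).two_le (Nat.le_self_pow hl p)
  rw [cast_choose_prime_pow_mul_add_one p l u (by omega), Nat.add_sub_cancel, if_pos dvd_rfl,
    if_neg fun h => (Nat.le_of_dvd (by omega) ((Nat.dvd_add_right dvd_rfl).1 h)).not_gt hq,
    Nat.div_self (by omega), Nat.choose_one_right, add_zero]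

variable {K : Type*} [Field K] [CharP K p]

theorem pow_eq_one_of_pow_prime_pow_mul_eq_one {x : K} {l u : ℕ}
    (h : x ^ (p ^ l * u) = 1) : x ^ u = 1 :=
  iterateFrobenius_inj K p l (by simpa [iterateFrobenius_def, ← pow_mul, mul_comm] using h)

theorem one_add_inv_pow_prime_pow_eq_self_iff {a : K} {l : ℕ} :
    (1 + a⁻¹) ^ p ^ l = 1 + a⁻¹ ↔ a ^ p ^ l = a := by
  rw [add_pow_char_pow, one_pow, inv_pow, add_right_inj, inv_inj]

end CharP

noncomputable def fwdDiffPow (K : Type*) [CommRing K] (m : ℕ) : Polynomial K :=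
  (Polynomial.X + 1) ^ m - Polynomial.X ^ m

theorem coeff_taylor_fwdDiffPow {K : Type*} [CommRing K] (a : K) (m n : ℕ) :
    (Polynomial.taylor a (fwdDiffPow K m)).coeff n =
      ((a + 1) ^ (m - n) - a ^ (m - n)) * m.choose n := by
  rw [fwdDiffPow, Polynomial.taylor_apply, Polynomial.sub_comp, Polynomial.pow_comp,
    Polynomial.pow_comp, Polynomial.add_comp, Polynomial.X_comp, Polynomial.one_comp, add_assoc,
    ← Polynomial.C_1, ← Polynomial.C_add, Polynomial.coeff_sub, Polynomial.coeff_X_add_C_pow,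
    Polynomial.coeff_X_add_C_pow, sub_mul]

theorem add_one_pow_eq_pow_iff {K : Type*} [Field K] {a : K} (ha : a ≠ 0) (k : ℕ) :
    (a + 1) ^ k = a ^ k ↔ (1 + a⁻¹) ^ k = 1 := by
  rw [← div_eq_one_iff_eq (pow_ne_zero _ ha), ← div_pow, add_div, div_self ha, one_div]

theorem coeff_taylor_fwdDiffPow_eq_zero_iff {K : Type*} [Field K] {a : K} (ha : a ≠ 0)
    (m n : ℕ) :
    (Polynomial.taylor a (fwdDiffPow K m)).coeff n = 0 ↔
      (1 + a⁻¹) ^ (m - n) = 1 ∨ ((m.choose n : ℕ) : K) = 0 := by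
  rw [coeff_taylor_fwdDiffPow, mul_eq_zero, sub_eq_zero, add_one_pow_eq_pow_iff ha]

theorem pow_mul_pred_mul_pow {M : Type*} [Monoid M] (x : M) (q : ℕ) {u : ℕ} (hu : u ≠ 0) :
    x ^ (q * (u - 1)) * x ^ q = x ^ (q * u) := by
  rw [← pow_add, ← Nat.mul_add_one, Nat.sub_add_cancel (Nat.one_le_iff_ne_zero.2 hu)]

section Coefficients

variable (p : ℕ) [Fact p.Prime] {K : Type*} [Field K] [CharP K p] {l u : ℕ} {a : K}

theorem coeff_taylor_fwdDiffPow_eq_zero_of_lt (ha : a ≠ 0) (hc : (1 + a⁻¹) ^ (p ^ l * u) = 1)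
    {n : ℕ} (hn0 : n ≠ 0) (hn : n < p ^ l) :
    (Polynomial.taylor a (fwdDiffPow K (p ^ l * u + 1))).coeff n = 0 := by
  rw [coeff_taylor_fwdDiffPow_eq_zero_iff ha]
  rcases eq_or_ne n 1 with rfl | hn1
  · exact Or.inl hc
  · exact Or.inr (cast_choose_prime_pow_mul_add_one_eq_zero p u (by omega) hn)

theorem coeff_taylor_fwdDiffPow_prime_pow_eq_zero_iff (hl : l ≠ 0) (hu : ¬ p ∣ u) (ha : a ≠ 0)
    (hc : (1 + a⁻¹) ^ (p ^ l * u) = 1) :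
    (Polynomial.taylor a (fwdDiffPow K (p ^ l * u + 1))).coeff (p ^ l) = 0 ↔ a ^ p ^ l = a := by
  have hu0 : u ≠ 0 := fun h => hu (h ▸ dvd_zero p)
  have huK : (u : K) ≠ 0 := by rwa [Ne, CharP.cast_eq_zero_iff K p]
  have hsplit := (pow_mul_pred_mul_pow (1 + a⁻¹) (p ^ l) hu0).trans hc
  have hexp : p ^ l * u + 1 - p ^ l = p ^ l * (u - 1) + 1 := by
    rw [Nat.mul_sub_one]; have := Nat.le_mul_of_pos_right (p ^ l) (Nat.pos_of_ne_zero hu0); omega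
  rw [coeff_taylor_fwdDiffPow_eq_zero_iff ha, cast_choose_prime_pow_mul_add_one_prime_pow p u hl,
    or_iff_left huK, hexp, pow_succ, ← one_add_inv_pow_prime_pow_eq_self_iff p]
  set c := 1 + a⁻¹
  rw [← hsplit, mul_right_inj' (left_ne_zero_of_mul_eq_one hsplit), eq_comm]

theorem coeff_taylor_fwdDiffPow_prime_pow_add_one_ne_zero (hl : l ≠ 0) (hu : ¬ p ∣ u)
    (ha : a ≠ 0) (hc : (1 + a⁻¹) ^ (p ^ l * u) = 1) :
    (Polynomial.taylor a (fwdDiffPow K (p ^ l * u + 1))).coeff (p ^ l + 1) ≠ 0 := by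
  have hu0 : u ≠ 0 := fun h => hu (h ▸ dvd_zero p)
  have huK : (u : K) ≠ 0 := by rwa [Ne, CharP.cast_eq_zero_iff K p]
  have hexp : p ^ l * u + 1 - (p ^ l + 1) = p ^ l * (u - 1) := by
    rw [Nat.mul_sub_one]; omega
  rw [Ne, coeff_taylor_fwdDiffPow_eq_zero_iff ha,
    cast_choose_prime_pow_mul_add_one_prime_pow_add_one p u hl, or_iff_left huK, hexp]
  intro h
  have hq : (1 + a⁻¹) ^ (p ^ l * 1) = 1 := by
    simpa [h] using (pow_mul_pred_mul_pow (1 + a⁻¹) (p ^ l) hu0).trans hc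
  simpa [ha] using pow_eq_one_of_pow_prime_pow_mul_eq_one p hq

end Coefficients

theorem gcd_mul_sub_one_dvd {q : ℕ} (hq : 0 < q) (u : ℕ) : Nat.gcd (q * u) (q - 1) ∣ u := by
  have hcop : Nat.Coprime (Nat.gcd (q * u) (q - 1)) q :=
    Nat.Coprime.coprime_dvd_left (Nat.gcd_dvd_right _ _) <| by
      rw [Nat.coprime_comm, Nat.Coprime, Nat.gcd_self_sub_right hq, Nat.gcd_one_right]
  exact hcop.dvd_of_dvd_mul_left (Nat.gcd_dvd_left _ _)

theorem not_dvd_gcd_prime_pow_mul_sub_one {p l : ℕ} (hp : p.Prime) (hl : l ≠ 0) (u : ℕ) :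
    ¬ p ∣ Nat.gcd (p ^ l * u) (p ^ l - 1) := fun hd => by
  have h1 := Nat.dvd_sub (dvd_pow_self p hl) (hd.trans (Nat.gcd_dvd_right _ _))
  rw [Nat.sub_sub_self (Nat.one_le_pow _ _ hp.pos)] at h1
  exact hp.not_dvd_one h1

theorem pow_pred_eq_one_iff {G : Type*} [GroupWithZero G] {x : G} (hx : x ≠ 0) {n : ℕ}
    (hn : n ≠ 0) : x ^ (n - 1) = 1 ↔ x ^ n = x := by
  rw [← mul_eq_right₀ hx, ← pow_succ, Nat.sub_add_cancel (Nat.one_le_iff_ne_zero.2 hn)]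

section Counting

variable {K : Type*} [Field K]

theorem card_nthRootsFinset_one_le (n : ℕ) : (Polynomial.nthRootsFinset n (1 : K)).card ≤ n := by
  classical
  rw [Polynomial.nthRootsFinset_def]
  exact (Multiset.toFinset_card_le _).trans (Polynomial.card_nthRoots n 1)

theorem card_nthRootsFinset_one [IsSepClosed K] {n : ℕ} (hn : (n : K) ≠ 0) :
    (Polynomial.nthRootsFinset n (1 : K)).card = n :=
  have : NeZero (n : K) := ⟨hn⟩
  (HasEnoughRootsOfUnity.exists_primitiveRoot K n).choose_spec.card_nthRootsFinset

theorem nthRootsFinset_one_subset_of_dvd {d n : ℕ} (hd : 0 < d) (hn : 0 < n) (hdn : d ∣ n) :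
    Polynomial.nthRootsFinset d (1 : K) ⊆ Polynomial.nthRootsFinset n (1 : K) := fun x hx => by
  obtain ⟨k, rfl⟩ := hdn
  rw [Polynomial.mem_nthRootsFinset hd] at hx
  rw [Polynomial.mem_nthRootsFinset hn, pow_mul, hx, one_pow]

theorem one_add_inv_injective : Function.Injective fun a : K => 1 + a⁻¹ :=
  fun _ _ h => inv_injective (add_left_cancel h)

variable (p : ℕ) [Fact p.Prime] [CharP K p] {l u : ℕ}

theorem finite_and_ncard_le_gcd_sub_one (hl : l ≠ 0) (hu : u ≠ 0) {S : Set K}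
    (hS : ∀ a ∈ S, (1 + a⁻¹) ^ (p ^ l * u) = 1 ∧ a ^ p ^ l = a ∧ a ≠ 0) :
    S.Finite ∧ S.ncard ≤ Nat.gcd (p ^ l * u) (p ^ l - 1) - 1 := by
  set d := Nat.gcd (p ^ l * u) (p ^ l - 1)
  have hq : 2 ≤ p ^ l := le_trans (Fact.out : p.Prime).two_le (Nat.le_self_pow hl p)
  have hd : 0 < d := Nat.gcd_pos_of_pos_right _ (by omega)
  set T : Set K := ↑(Polynomial.nthRootsFinset d (1 : K)) \ {1}
  have hT : T.Finite := (Polynomial.nthRootsFinset d (1 : K)).finite_toSet.sdiff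
  have hmaps : Set.MapsTo (fun a : K => 1 + a⁻¹) S T := by
    rintro a ha
    obtain ⟨hc, haq, ha0⟩ := hS a ha
    have hc0 : 1 + a⁻¹ ≠ 0 := by
      rintro h0; rw [h0, zero_pow (by positivity)] at hc; exact zero_ne_one hc
    have hcq : (1 + a⁻¹) ^ (p ^ l - 1) = 1 :=
      (pow_pred_eq_one_iff hc0 (by omega)).2 ((one_add_inv_pow_prime_pow_eq_self_iff p).2 haq)
    exact ⟨(Polynomial.mem_nthRootsFinset hd 1).2 (pow_gcd_eq_one.2 ⟨hc, hcq⟩), by simpa using ha0⟩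
  refine ⟨hT.of_injOn hmaps one_add_inv_injective.injOn, ?_⟩
  calc S.ncard ≤ T.ncard := Set.ncard_le_ncard_of_injOn _ hmaps one_add_inv_injective.injOn hT
    _ = (Polynomial.nthRootsFinset d (1 : K)).card - 1 := by
        rw [Set.ncard_sdiff_singleton_of_mem (Polynomial.one_mem_nthRootsFinset hd),
          Set.ncard_coe_finset]
    _ ≤ d - 1 := Nat.sub_le_sub_right (card_nthRootsFinset_one_le d) 1

theorem finite_and_ncard_le_sub_gcd [IsSepClosed K] (hl : l ≠ 0) (hu : u ≠ 0) {S : Set K}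
    (hS : ∀ a ∈ S, (1 + a⁻¹) ^ (p ^ l * u) = 1 ∧ a ^ p ^ l ≠ a) :
    S.Finite ∧ S.ncard ≤ u - Nat.gcd (p ^ l * u) (p ^ l - 1) := by
  set d := Nat.gcd (p ^ l * u) (p ^ l - 1)
  have hq : 2 ≤ p ^ l := le_trans (Fact.out : p.Prime).two_le (Nat.le_self_pow hl p)
  have hd : 0 < d := Nat.gcd_pos_of_pos_right _ (by omega)
  have hdK : (d : K) ≠ 0 := by
    rw [Ne, CharP.cast_eq_zero_iff K p]
    exact not_dvd_gcd_prime_pow_mul_sub_one Fact.out hl u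
  set T : Set K := ↑(Polynomial.nthRootsFinset u (1 : K)) \ ↑(Polynomial.nthRootsFinset d (1 : K))
  have hT : T.Finite := (Polynomial.nthRootsFinset u (1 : K)).finite_toSet.sdiff
  have hmaps : Set.MapsTo (fun a : K => 1 + a⁻¹) S T := by
    rintro a ha
    obtain ⟨hc, haq⟩ := hS a ha
    have hcu := pow_eq_one_of_pow_prime_pow_mul_eq_one p hc
    have hc0 : 1 + a⁻¹ ≠ 0 := by
      rintro h0; rw [h0, zero_pow hu] at hcu; exact zero_ne_one hcu
    refine ⟨(Polynomial.mem_nthRootsFinset (by omega) 1).2 hcu, fun hcd => haq ?_⟩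
    obtain ⟨k, hk⟩ := Nat.gcd_dvd_right (p ^ l * u) (p ^ l - 1)
    rw [← one_add_inv_pow_prime_pow_eq_self_iff p, ← pow_pred_eq_one_iff hc0 (by omega), hk,
      pow_mul, (Polynomial.mem_nthRootsFinset hd 1).1 hcd, one_pow]
  refine ⟨hT.of_injOn hmaps one_add_inv_injective.injOn, ?_⟩
  calc S.ncard ≤ T.ncard := Set.ncard_le_ncard_of_injOn _ hmaps one_add_inv_injective.injOn hT
    _ = (Polynomial.nthRootsFinset u (1 : K)).card - d := by
        rw [Set.ncard_sdiff (Finset.coe_subset.2 (nthRootsFinset_one_subset_of_dvd hd (by omega)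
          (gcd_mul_sub_one_dvd (by omega) u))), Set.ncard_coe_finset, Set.ncard_coe_finset,
          card_nthRootsFinset_one hdK]
    _ ≤ u - d := Nat.sub_le_sub_right (card_nthRootsFinset_one_le u) d

end Counting

section Multiplicity

variable (p : ℕ) [Fact p.Prime] {K : Type*} [Field K] [CharP K p] {l u : ℕ} {a : K}

theorem multAt_diffXY_fwdDiffPow_of_pow_eq_self (hl : l ≠ 0) (hu : ¬ p ∣ u) (ha : a ≠ 0)
    (hc : (1 + a⁻¹) ^ (p ^ l * u) = 1) (haq : a ^ p ^ l = a) :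
    multAt (diffXY (fwdDiffPow K (p ^ l * u + 1))) a a = p ^ l + 1 := by
  rw [multAt_diffXY]
  refine IsLeast.csInf_eq ⟨⟨by omega,
    coeff_taylor_fwdDiffPow_prime_pow_add_one_ne_zero p hl hu ha hc⟩,
    fun n ⟨hn0, hn⟩ => not_lt.1 fun hlt => hn ?_⟩
  rcases (Nat.lt_succ_iff.1 hlt).lt_or_eq with hlt | rfl
  · exact coeff_taylor_fwdDiffPow_eq_zero_of_lt p ha hc hn0 hlt
  · exact (coeff_taylor_fwdDiffPow_prime_pow_eq_zero_iff p hl hu ha hc).2 haq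

theorem multAt_diffXY_fwdDiffPow_of_pow_ne_self (hl : l ≠ 0) (hu : ¬ p ∣ u) (ha : a ≠ 0)
    (hc : (1 + a⁻¹) ^ (p ^ l * u) = 1) (haq : a ^ p ^ l ≠ a) :
    multAt (diffXY (fwdDiffPow K (p ^ l * u + 1))) a a = p ^ l :=
  (multAt_diffXY _ a).trans <| IsLeast.csInf_eq
    ⟨⟨pow_ne_zero l (Fact.out : p.Prime).ne_zero,
      mt (coeff_taylor_fwdDiffPow_prime_pow_eq_zero_iff p hl hu ha hc).1 haq⟩,
    fun _ ⟨hn0, hn⟩ => not_lt.1 fun hlt =>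
      hn (coeff_taylor_fwdDiffPow_eq_zero_of_lt p ha hc hn0 hlt)⟩

end Multiplicity

theorem exists_eq_pow_mul_add_one_of_modEq {p m l : ℕ} (hm1 : m ≡ 1 [MOD p])
    (hl : p ^ l ∣ m - 1) (hl' : ¬ p ^ (l + 1) ∣ m - 1) :
    ∃ u, m = p ^ l * u + 1 ∧ ¬ p ∣ u ∧ l ≠ 0 := by
  obtain ⟨u, hu⟩ := hl
  have hm : m - 1 ≠ 0 := fun h0 => hl' (h0 ▸ dvd_zero _)
  refine ⟨u, by omega, fun ⟨v, hv⟩ => hl' ⟨v, by rw [hu, hv, pow_succ, mul_assoc]⟩, ?_⟩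
  rintro rfl
  exact hl' (Nat.dvd_of_mod_eq_zero (by simpa using Nat.sub_mod_eq_zero_of_mod_eq hm1))

section Fpoly

variable (p : ℕ) [Fact p.Prime] {m : ℕ} {h : MvPolynomial (Fin 2) (ZMod p)}
  {a : AlgebraicClosure (ZMod p)}

theorem toK_fpoly :
    toK p (fpoly p m) = diffXY (fwdDiffPow (AlgebraicClosure (ZMod p)) m) := by
  simp only [toK, fpoly, diffXY, fwdDiffPow, map_add, map_sub, map_pow, map_X, map_one,
    Polynomial.aeval_X]
  ring

theorem toK_fpoly_eq_X_sub_X_mul (hfh : fpoly p m = (X 0 - X 1) * h) :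
    toK p (fpoly p m) = (X 0 - X 1) * toK p h := by
  simp [toK, hfh]

theorem one_add_inv_pow_eq_one_of_eval_eq_zero (hm1 : m ≡ 1 [MOD p]) (hm : 1 < m)
    (hfh : fpoly p m = (X 0 - X 1) * h) (h0 : eval ![a, a] (toK p h) = 0) :
    a ≠ 0 ∧ (1 + a⁻¹) ^ (m - 1) = 1 := by
  have hmK : (m : AlgebraicClosure (ZMod p)) = 1 := by
    rw [← Nat.cast_one, CharP.natCast_eq_natCast _ p]
    exact hm1
  have hdf := eval_pderiv_zero_X_sub_X_mul (toK p h) a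
  rw [← toK_fpoly_eq_X_sub_X_mul p hfh, h0, toK_fpoly, eval_pderiv_zero_diffXY] at hdf
  have hpow : (a + 1) ^ (m - 1) = a ^ (m - 1) := by
    simpa [fwdDiffPow, Polynomial.derivative_pow, hmK, sub_eq_zero] using hdf
  have ha : a ≠ 0 := by
    rintro rfl
    simp [show m - 1 ≠ 0 by omega] at hpow
  exact ⟨ha, (add_one_pow_eq_pow_iff ha _).1 hpow⟩

variable {l u : ℕ}

theorem multAt_toK_of_pow_eq_self (hl : l ≠ 0) (hu : ¬ p ∣ u)
    (hfh : fpoly p (p ^ l * u + 1) = (X 0 - X 1) * h) (ha : a ≠ 0)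
    (hc : (1 + a⁻¹) ^ (p ^ l * u) = 1) (haq : a ^ p ^ l = a) :
    multAt (toK p h) a a = p ^ l ∧ multAt (toK p (fpoly p (p ^ l * u + 1))) a a = p ^ l + 1 := by
  have hf := toK_fpoly p ▸ multAt_diffXY_fwdDiffPow_of_pow_eq_self p hl hu ha hc haq
  refine ⟨?_, hf⟩
  rw [toK_fpoly_eq_X_sub_X_mul p hfh, multAt_X_sub_X_mul (by omega)] at hf
  omega

theorem multAt_toK_of_pow_ne_self (hl : l ≠ 0) (hu : ¬ p ∣ u)
    (hfh : fpoly p (p ^ l * u + 1) = (X 0 - X 1) * h) (ha : a ≠ 0)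
    (hc : (1 + a⁻¹) ^ (p ^ l * u) = 1) (haq : a ^ p ^ l ≠ a) :
    multAt (toK p h) a a = p ^ l - 1 ∧ multAt (toK p (fpoly p (p ^ l * u + 1))) a a = p ^ l := by
  have hf := toK_fpoly p ▸ multAt_diffXY_fwdDiffPow_of_pow_ne_self p hl hu ha hc haq
  refine ⟨?_, hf⟩
  have hq0 : p ^ l ≠ 0 := pow_ne_zero l (Fact.out : p.Prime).ne_zero
  rw [toK_fpoly_eq_X_sub_X_mul p hfh, multAt_X_sub_X_mul (by omega)] at hf
  omega

end Fpoly

theorem stmt10_general (p : ℕ) [Fact p.Prime]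
    (m l : ℕ) (hm1 : m ≡ 1 [MOD p])
    (hl : p ^ l ∣ m - 1) (hl' : ¬ p ^ (l + 1) ∣ m - 1)
    (h : MvPolynomial (Fin 2) (ZMod p))
    (hfh : fpoly p m = (X 0 - X 1) * h) :
    (∀ x0 : AlgebraicClosure (ZMod p), IsSingAt (toK p h) x0 x0 →
      x0 ^ p ^ l = x0 → x0 ≠ 0 →
        multAt (toK p h) x0 x0 = p ^ l ∧ multAt (toK p (fpoly p m)) x0 x0 = p ^ l + 1) ∧
    ({x0 : AlgebraicClosure (ZMod p) |
        IsSingAt (toK p h) x0 x0 ∧ x0 ^ p ^ l = x0 ∧ x0 ≠ 0}.Finite ∧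
      {x0 : AlgebraicClosure (ZMod p) |
        IsSingAt (toK p h) x0 x0 ∧ x0 ^ p ^ l = x0 ∧ x0 ≠ 0}.ncard ≤
          Nat.gcd (m - 1) (p ^ l - 1) - 1) ∧
    (∀ x0 : AlgebraicClosure (ZMod p), IsSingAt (toK p h) x0 x0 →
      x0 ^ p ^ l ≠ x0 →
        multAt (toK p h) x0 x0 = p ^ l - 1 ∧ multAt (toK p (fpoly p m)) x0 x0 = p ^ l) ∧
    ({x0 : AlgebraicClosure (ZMod p) |
        IsSingAt (toK p h) x0 x0 ∧ x0 ^ p ^ l ≠ x0}.Finite ∧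
      {x0 : AlgebraicClosure (ZMod p) |
        IsSingAt (toK p h) x0 x0 ∧ x0 ^ p ^ l ≠ x0}.ncard ≤
          (m - 1) / p ^ l - Nat.gcd (m - 1) (p ^ l - 1)) := by
  obtain ⟨u, rfl, hpu, hl0⟩ := exists_eq_pow_mul_add_one_of_modEq hm1 hl hl'
  have hu0 : u ≠ 0 := fun h0 => hpu (h0 ▸ dvd_zero p)
  have hq0 : 0 < p ^ l := pow_pos (Fact.out : p.Prime).pos l
  have hsing : ∀ a, IsSingAt (toK p h) a a → a ≠ 0 ∧ (1 + a⁻¹) ^ (p ^ l * u) = 1 := fun a hs => by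
    simpa using one_add_inv_pow_eq_one_of_eval_eq_zero p hm1
      (Nat.lt_add_of_pos_left (Nat.mul_pos hq0 (Nat.pos_of_ne_zero hu0))) hfh hs.1
  rw [Nat.add_sub_cancel, Nat.mul_div_cancel_left _ hq0]
  exact ⟨fun a hs haq _ =>
      multAt_toK_of_pow_eq_self p hl0 hpu hfh (hsing a hs).1 (hsing a hs).2 haq,
    finite_and_ncard_le_gcd_sub_one p hl0 hu0 fun a ⟨hs, haq, ha⟩ => ⟨(hsing a hs).2, haq, ha⟩,
    fun a hs haq => multAt_toK_of_pow_ne_self p hl0 hpu hfh (hsing a hs).1 (hsing a hs).2 haq,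
    finite_and_ncard_le_sub_gcd p hl0 hu0 fun a ⟨hs, haq⟩ => ⟨(hsing a hs).2, haq⟩⟩

/-- Singular points `t = (x₀,x₀)` of `h` on the diagonal: (a) those with
`x₀ ∈ F_{p^l} \ {0}` have `m_t(h) = p^l` and `m_t(f) = p^l + 1`, and there are at most
`d - 1` of them; (b) those with `x₀ ∉ F_{p^l}` have `m_t(h) = p^l - 1` and `m_t(f) = p^l`,
and there are at most `(m-1)/p^l - d` of them.  (Membership of `x₀` in the subfield
`F_{p^l}` of the algebraic closure is expressed by `x₀^{p^l} = x₀`.) -/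
theorem stmt10 (p : ℕ) [Fact p.Prime] (hp : Odd p)
    (m l : ℕ) (hm : 3 ≤ m) (hm1 : m ≡ 1 [MOD p])
    (hl : p ^ l ∣ m - 1) (hl' : ¬ p ^ (l + 1) ∣ m - 1)
    (h : MvPolynomial (Fin 2) (ZMod p))
    (hfh : fpoly p m = (X 0 - X 1) * h) :
    (∀ x0 : AlgebraicClosure (ZMod p), IsSingAt (toK p h) x0 x0 →
      x0 ^ p ^ l = x0 → x0 ≠ 0 →
        multAt (toK p h) x0 x0 = p ^ l ∧ multAt (toK p (fpoly p m)) x0 x0 = p ^ l + 1) ∧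
    ({x0 : AlgebraicClosure (ZMod p) |
        IsSingAt (toK p h) x0 x0 ∧ x0 ^ p ^ l = x0 ∧ x0 ≠ 0}.Finite ∧
      {x0 : AlgebraicClosure (ZMod p) |
        IsSingAt (toK p h) x0 x0 ∧ x0 ^ p ^ l = x0 ∧ x0 ≠ 0}.ncard ≤
          Nat.gcd (m - 1) (p ^ l - 1) - 1) ∧
    (∀ x0 : AlgebraicClosure (ZMod p), IsSingAt (toK p h) x0 x0 →
      x0 ^ p ^ l ≠ x0 →
        multAt (toK p h) x0 x0 = p ^ l - 1 ∧ multAt (toK p (fpoly p m)) x0 x0 = p ^ l) ∧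
    ({x0 : AlgebraicClosure (ZMod p) |
        IsSingAt (toK p h) x0 x0 ∧ x0 ^ p ^ l ≠ x0}.Finite ∧
      {x0 : AlgebraicClosure (ZMod p) |
        IsSingAt (toK p h) x0 x0 ∧ x0 ^ p ^ l ≠ x0}.ncard ≤
          (m - 1) / p ^ l - Nat.gcd (m - 1) (p ^ l - 1)) :=
  stmt10_general p m l hm1 hl hl' h hfh
end

section
/- Let t = (x₀, y₀) be a singular point of f with coordinates in an algebraic closure K of F_p such that x₀ ≠ y₀ and neither x₀ nor y₀ lies in F_{p^l}. Let F_{p^l} and F_{p^l+1} denote the homogeneous components of total degrees p^l and p^l + 1 of f(X+x₀, Y+y₀) in K[X,Y]. Then F_{p^l} and F_{p^l+1} have a common nonconstant factor in K[X,Y] if and only if y₀·(x₀+1)^{p^l}·(y₀^{p^l−1} − 1)^{p^l+1} = x₀·(y₀+1)^{p^l}·(x₀^{p^l−1} − 1)^{p^l+1}. -/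
/-!
Write `q = p ^ l` and `m = q * s + 1` with `p ∤ s`. Since
`(X + c) ^ m = (X ^ q + c ^ q) ^ s * (X + c)`, the components of degrees `q` and `q + 1` of
`f(X + x₀, Y + y₀)` are binomials `α X ^ q - β Y ^ q` and `α' X ^ (q + 1) - β' Y ^ (q + 1)`.
The first one is `α (X - r Y) ^ q` with `r ^ q = β / α`, so the two forms share a factor iff
`X - r Y` divides the second, i.e. `α' r ^ (q + 1) = β'`, i.e. (Frobenius being injective)
`β ^ (q + 1) α' ^ q = α ^ (q + 1) β' ^ q`. At a singular point
`(x₀ + 1) ^ (q s) = x₀ ^ (q s) = y₀ ^ (q s) = (y₀ + 1) ^ (q s)`; this expresses `α, β, α', β'`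
through `x₀ ^ q` and `y₀ ^ q` and turns the relation into the stated one.
-/

open MvPolynomial

open scoped Polynomial

namespace Polynomial

variable {R : Type*} [CommRing R] (p : ℕ) [ExpChar R p] (n : ℕ)

theorem X_add_C_pow_expChar_pow_mul (c : R) (s : ℕ) :
    (X + C c) ^ (p ^ n * s) = expand R (p ^ n) ((X + C (c ^ p ^ n)) ^ s) := by
  rw [pow_mul, add_pow_expChar_pow, map_pow, map_add, expand_X, expand_C, C_pow]

variable {p n}

theorem coeff_mul_X_eq_ite (f : R[X]) (d : ℕ) :
    (f * X).coeff d = if 1 ≤ d then f.coeff (d - 1) else 0 := by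
  simpa using coeff_mul_X_pow' f 1 d

theorem coeff_X_add_C_pow_expChar_pow_mul_add_one (hq : 2 ≤ p ^ n) (c : R) (s : ℕ) :
    ((X + C c) ^ (p ^ n * s + 1)).coeff (p ^ n) = s * (c ^ p ^ n) ^ (s - 1) * c := by
  have hq0 : 0 < p ^ n := by omega
  rw [pow_succ, X_add_C_pow_expChar_pow_mul, mul_add, coeff_add, coeff_mul_C, coeff_mul_X_eq_ite,
    if_pos (by omega), coeff_expand hq0, coeff_expand hq0,
    if_neg (Nat.not_dvd_of_pos_of_lt (by omega) (by omega)), if_pos dvd_rfl, Nat.div_self hq0,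
    coeff_X_add_C_pow, Nat.choose_one_right]
  ring

theorem coeff_succ_X_add_C_pow_expChar_pow_mul_add_one (hq : 2 ≤ p ^ n) (c : R) (s : ℕ) :
    ((X + C c) ^ (p ^ n * s + 1)).coeff (p ^ n + 1) = s * (c ^ p ^ n) ^ (s - 1) := by
  have hq0 : 0 < p ^ n := by omega
  rw [pow_succ, X_add_C_pow_expChar_pow_mul, mul_add, coeff_add, coeff_mul_C, coeff_mul_X_eq_ite,
    if_pos (by omega), Nat.add_sub_cancel, coeff_expand hq0, coeff_expand hq0, if_pos dvd_rfl,
    if_neg fun h => by have := Nat.le_of_dvd one_pos ((Nat.dvd_add_right dvd_rfl).mp h); omega,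
    Nat.div_self hq0, coeff_X_add_C_pow, Nat.choose_one_right]
  ring

end Polynomial

namespace MvPolynomial

theorem homogeneousComponent_aeval_X_s15 {σ R : Type*} [CommSemiring R] (i : σ) (P : Polynomial R)
    (n : ℕ) :
    homogeneousComponent n (Polynomial.aeval (X i : MvPolynomial σ R) P) =
      C (P.coeff n) * X i ^ n := by
  induction P using Polynomial.induction_on' with
  | add P Q hP hQ => simp only [map_add, Polynomial.coeff_add, add_mul, hP, hQ]
  | monomial k a =>
    rw [Polynomial.aeval_monomial, algebraMap_eq, homogeneousComponent_of_mem
      ((mem_homogeneousSubmodule _ _).mpr ((isHomogeneous_X_pow i k).C_mul a)),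
      Polynomial.coeff_monomial]
    split_ifs <;> simp_all

variable {K : Type*} [Field K]

theorem totalDegree_X_sub_C_mul_X (r : K) :
    (X 0 - C r * X 1 : MvPolynomial (Fin 2) K).totalDegree = 1 := by
  refine ((isHomogeneous_X K 0).sub ((isHomogeneous_X K 1).C_mul r)).totalDegree fun h => ?_
  simpa using congrArg (eval ![1, 0]) h

theorem prime_X_sub_C_mul_X (r : K) : Prime (X 0 - C r * X 1 : MvPolynomial (Fin 2) K) := by
  refine (irreducible_of_totalDegree_eq_one (totalDegree_X_sub_C_mul_X r) fun x hx => ?_).prime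
  refine isUnit_of_dvd_one ?_
  simpa [coeff_X, Finsupp.single_eq_single_iff] using hx (Finsupp.single 0 1)

theorem X_sub_C_mul_X_dvd_iff (r a b : K) (n : ℕ) :
    (X 0 - C r * X 1 : MvPolynomial (Fin 2) K) ∣ C a * X 0 ^ n - C b * X 1 ^ n ↔
      a * r ^ n = b := by
  constructor
  · rintro ⟨t, ht⟩
    have := congrArg (eval ![r, 1]) ht
    simp only [map_sub, map_mul, eval_C, map_pow, eval_X, Matrix.cons_val_zero,
      Matrix.cons_val_one, Matrix.cons_val_fin_one, one_pow, mul_one, sub_self, zero_mul] at this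
    linear_combination this
  · rintro rfl
    have : C a * X 0 ^ n - C (a * r ^ n) * X 1 ^ n =
        C a * ((X 0 : MvPolynomial (Fin 2) K) ^ n - (C r * X 1) ^ n) := by
      rw [C_mul, C_pow]; ring
    rw [this]
    exact dvd_mul_of_dvd_right (sub_dvd_pow_sub_pow _ _ n) _

theorem exists_dvd_mul_pow_and_dvd_iff {σ R : Type*} [CommRing R] [IsDomain R]
    {π u G : MvPolynomial σ R} (hπ : Prime π) (hdeg : 0 < π.totalDegree) (hu : IsUnit u)
    {n : ℕ} (hn : n ≠ 0) :
    (∃ c : MvPolynomial σ R, 0 < c.totalDegree ∧ c ∣ u * π ^ n ∧ c ∣ G) ↔ π ∣ G := by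
  refine ⟨fun ⟨c, hc, hcπ, hcG⟩ => ?_,
    fun h => ⟨π, hdeg, dvd_mul_of_dvd_right (dvd_pow_self π hn) _, h⟩⟩
  obtain ⟨i, -, hci⟩ := (dvd_prime_pow hπ n).mp (hu.dvd_mul_left.mp hcπ)
  have hi : i ≠ 0 := by
    rintro rfl
    have hcu : IsUnit c := associated_one_iff_isUnit.mp (pow_zero π ▸ hci)
    have := (isUnit_iff_totalDegree_of_isReduced.mp hcu).2
    omega
  exact ((dvd_pow_self π hi).trans hci.symm.dvd).trans hcG

theorem exists_common_factor_binomials_iff [IsAlgClosed K] (p : ℕ) [ExpChar K p] (n : ℕ)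
    {a b a' b' : K} (ha : a ≠ 0) :
    (∃ c : MvPolynomial (Fin 2) K, 0 < c.totalDegree ∧
        c ∣ C a * X 0 ^ p ^ n - C b * X 1 ^ p ^ n ∧
        c ∣ C a' * X 0 ^ (p ^ n + 1) - C b' * X 1 ^ (p ^ n + 1)) ↔
      b ^ (p ^ n + 1) * a' ^ p ^ n = a ^ (p ^ n + 1) * b' ^ p ^ n := by
  obtain ⟨r, hr⟩ := IsAlgClosed.exists_pow_nat_eq (b / a) (expChar_pow_pos K p n)
  obtain rfl : b = a * r ^ p ^ n := by rw [hr, mul_div_cancel₀ b ha]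
  have hform : C a * X 0 ^ p ^ n - C (a * r ^ p ^ n) * X 1 ^ p ^ n =
      C a * (X 0 - C r * X 1 : MvPolynomial (Fin 2) K) ^ p ^ n := by
    rw [sub_pow_expChar_pow, mul_pow, C_mul, C_pow]; ring
  rw [hform, exists_dvd_mul_pow_and_dvd_iff (prime_X_sub_C_mul_X r)
    (by rw [totalDegree_X_sub_C_mul_X]; exact one_pos) (ha.isUnit.map C)
    (expChar_pow_pos K p n).ne', X_sub_C_mul_X_dvd_iff, ← (iterateFrobenius_inj K p n).eq_iff,
    iterateFrobenius_def, iterateFrobenius_def]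
  constructor
  · intro h
    linear_combination a ^ (p ^ n + 1) * h
  · intro h
    refine mul_left_cancel₀ (pow_ne_zero (p ^ n + 1) ha) ?_
    linear_combination h

end MvPolynomial

theorem Nat.exists_eq_pow_mul_add_one {p m l : ℕ} (hm1 : m ≡ 1 [MOD p]) (hl : p ^ l ∣ m - 1)
    (hl' : ¬ p ^ (l + 1) ∣ m - 1) : l ≠ 0 ∧ ∃ s, ¬ p ∣ s ∧ m = p ^ l * s + 1 := by
  have hm : m ≠ 0 := by
    rintro rfl
    exact hl' (dvd_zero _)
  obtain ⟨s, hs⟩ := hl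
  refine ⟨?_, s, fun hps => hl' ?_, by omega⟩
  · rintro rfl
    exact hl' (by simpa using (Nat.modEq_iff_dvd' (by omega)).mp hm1.symm)
  · rw [hs, pow_succ]
    exact mul_dvd_mul_left _ hps

theorem pow_sub_self_pow_succ_mul_eq_iff {F : Type*} [Field F] {q : ℕ} (hq : q ≠ 0) {x y : F}
    (hx : x ≠ 0) (hy : y ≠ 0) :
    (y ^ q - y) ^ (q + 1) * (x ^ q * (x + 1) ^ q) =
        (x ^ q - x) ^ (q + 1) * (y ^ q * (y + 1) ^ q) ↔
      y * (x + 1) ^ q * (y ^ (q - 1) - 1) ^ (q + 1) =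
        x * (y + 1) ^ q * (x ^ (q - 1) - 1) ^ (q + 1) := by
  have hsub (z : F) : z ^ q - z = z * (z ^ (q - 1) - 1) := by
    rw [mul_sub, mul_pow_sub_one hq, mul_one]
  rw [hsub, hsub, mul_pow, mul_pow]
  conv_rhs => rw [← mul_right_inj' (mul_ne_zero (pow_ne_zero q hx) (pow_ne_zero q hy))]
  constructor <;> intro h <;> linear_combination h

theorem pow_succ_mul_pow_eq_iff_of_mul_eq {F : Type*} [Field F] (n : ℕ) {a a' b b' A B D E k : F}
    (hk : k ≠ 0) (hD : D ≠ 0) (hE : E ≠ 0) (ha : a * D = k * A) (ha' : a' * D = -k)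
    (hb : b * E = k * B) (hb' : b' * E = -k) :
    b ^ (n + 1) * a' ^ n = a ^ (n + 1) * b' ^ n ↔ B ^ (n + 1) * D = A ^ (n + 1) * E := by
  have hl : b ^ (n + 1) * a' ^ n * (D ^ (n + 1) * E ^ (n + 1)) =
      k ^ (n + 1) * (-k) ^ n * (B ^ (n + 1) * D) := by
    rw [show b ^ (n + 1) * a' ^ n * (D ^ (n + 1) * E ^ (n + 1)) =
      (b * E) ^ (n + 1) * (a' * D) ^ n * D by ring, hb, ha']
    ring
  have hr : a ^ (n + 1) * b' ^ n * (D ^ (n + 1) * E ^ (n + 1)) =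
      k ^ (n + 1) * (-k) ^ n * (A ^ (n + 1) * E) := by
    rw [show a ^ (n + 1) * b' ^ n * (D ^ (n + 1) * E ^ (n + 1)) =
      (a * D) ^ (n + 1) * (b' * E) ^ n * E by ring, ha, hb']
    ring
  rw [← mul_left_inj' (mul_ne_zero (pow_ne_zero _ hD) (pow_ne_zero _ hE)), hl, hr,
    mul_right_inj' (mul_ne_zero (pow_ne_zero _ hk) (pow_ne_zero _ (neg_ne_zero.mpr hk)))]

theorem ne_zero_and_add_one_ne_zero_of_pow_ne_self {R : Type*} [CommRing R] (p : ℕ) [ExpChar R p]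
    {n : ℕ} {x : R} (hx : x ^ p ^ n ≠ x) : x ≠ 0 ∧ x + 1 ≠ 0 := by
  refine ⟨fun h => hx (by rw [h, zero_pow (expChar_pow_pos R p n).ne']), fun h => hx ?_⟩
  have := add_pow_expChar_pow x 1 (p := p) (n := n)
  rw [h, one_pow, zero_pow (expChar_pow_pos R p n).ne'] at this
  linear_combination -this - h

noncomputable def shiftedPowDiff {R : Type*} [CommRing R] (m : ℕ) (c : R) : Polynomial R :=
  (Polynomial.X + Polynomial.C (c + 1)) ^ m - (Polynomial.X + Polynomial.C c) ^ m

section shiftedPowDiff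

open Polynomial

variable {R : Type*} [CommRing R] {p n : ℕ} [ExpChar R p]

theorem coeff_shiftedPowDiff_mul_eq (hq : 2 ≤ p ^ n) {s : ℕ} (hs : s ≠ 0) {c : R}
    (h : ((c + 1) ^ p ^ n) ^ s = (c ^ p ^ n) ^ s) :
    (shiftedPowDiff (p ^ n * s + 1) c).coeff (p ^ n) * (c ^ p ^ n * (c + 1) ^ p ^ n) =
      s * (c ^ p ^ n) ^ s * (c ^ p ^ n - c) := by
  obtain ⟨t, rfl⟩ := Nat.exists_eq_add_one_of_ne_zero hs
  rw [shiftedPowDiff, Polynomial.coeff_sub, coeff_X_add_C_pow_expChar_pow_mul_add_one hq,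
    coeff_X_add_C_pow_expChar_pow_mul_add_one hq, Nat.add_sub_cancel]
  have hfrob := add_pow_expChar_pow c 1 (p := p) (n := n)
  rw [one_pow] at hfrob
  push_cast
  linear_combination
    (↑t + 1) * c ^ p ^ n * (c + 1) * h - (↑t + 1) * (c ^ p ^ n) ^ (t + 1) * c * hfrob

theorem coeff_succ_shiftedPowDiff_mul_eq (hq : 2 ≤ p ^ n) {s : ℕ} (hs : s ≠ 0) {c : R}
    (h : ((c + 1) ^ p ^ n) ^ s = (c ^ p ^ n) ^ s) :
    (shiftedPowDiff (p ^ n * s + 1) c).coeff (p ^ n + 1) * (c ^ p ^ n * (c + 1) ^ p ^ n) =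
      -(s * (c ^ p ^ n) ^ s) := by
  obtain ⟨t, rfl⟩ := Nat.exists_eq_add_one_of_ne_zero hs
  rw [shiftedPowDiff, Polynomial.coeff_sub, coeff_succ_X_add_C_pow_expChar_pow_mul_add_one hq,
    coeff_succ_X_add_C_pow_expChar_pow_mul_add_one hq, Nat.add_sub_cancel]
  have hfrob := add_pow_expChar_pow c 1 (p := p) (n := n)
  rw [one_pow] at hfrob
  push_cast
  linear_combination (↑t + 1) * c ^ p ^ n * h - (↑t + 1) * (c ^ p ^ n) ^ (t + 1) * hfrob

end shiftedPowDiff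

theorem shiftAt_toK_fpoly (p : ℕ) [Fact p.Prime] (m : ℕ) (a b : AlgebraicClosure (ZMod p)) :
    shiftAt (toK p (fpoly p m)) a b =
      Polynomial.aeval (X 0) (shiftedPowDiff m a) -
        Polynomial.aeval (X 1) (shiftedPowDiff m b) := by
  simp only [shiftAt, aeval_eq_bind₁, toK, fpoly, map_add, map_sub, map_pow, map_X, map_one,
    bind₁_X_right, Matrix.cons_val_zero, Matrix.cons_val_one, Matrix.cons_val_fin_one,
    shiftedPowDiff, Polynomial.aeval_X, Polynomial.aeval_C, algebraMap_eq]
  ring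

theorem homogeneousComponent_shiftAt_toK_fpoly (p : ℕ) [Fact p.Prime] (m n : ℕ)
    (a b : AlgebraicClosure (ZMod p)) :
    homogeneousComponent n (shiftAt (toK p (fpoly p m)) a b) =
      C ((shiftedPowDiff m a).coeff n) * X 0 ^ n - C ((shiftedPowDiff m b).coeff n) * X 1 ^ n := by
  rw [shiftAt_toK_fpoly, map_sub, homogeneousComponent_aeval_X_s15, homogeneousComponent_aeval_X_s15]

theorem IsSingAt.toK_fpoly_pow_eq {p : ℕ} [Fact p.Prime] {m k : ℕ} (hm1 : m ≡ 1 [MOD p])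
    (hk : m = k + 1)
    {a b : AlgebraicClosure (ZMod p)} (h : IsSingAt (toK p (fpoly p m)) a b) :
    (a + 1) ^ k = a ^ k ∧ (b + 1) ^ k = b ^ k ∧ b ^ k = a ^ k := by
  have hmK : (m : AlgebraicClosure (ZMod p)) = 1 := by
    exact_mod_cast (CharP.natCast_eq_natCast _ p).mpr hm1
  obtain ⟨h0, h1, h2⟩ := h
  simp only [toK, fpoly, map_add, map_sub, map_pow, map_X, map_one, eval_X, Matrix.cons_val_zero,
    Matrix.cons_val_one, Matrix.cons_val_fin_one, Derivation.leibniz_pow,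
    pderiv_X, Pi.single_eq_same, Derivation.map_one_eq_zero, add_zero, smul_eq_mul, mul_one,
    nsmul_eq_mul, ne_eq, one_ne_zero, not_false_eq_true, Pi.single_eq_of_ne, mul_zero,
    sub_zero, map_mul, map_natCast, zero_ne_one, sub_self, zero_sub, map_neg, hmK, one_mul]
    at h0 h1 h2
  subst hk
  rw [Nat.add_sub_cancel] at h1 h2
  have ha : (a + 1) ^ k = a ^ k := by linear_combination h1
  have hb : (b + 1) ^ k = b ^ k := by linear_combination -h2
  exact ⟨ha, hb, by linear_combination -h0 + (a + 1) * ha - (b + 1) * hb⟩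

theorem stmt15_general (p : ℕ) [Fact p.Prime]
    (m l : ℕ) (hm1 : m ≡ 1 [MOD p])
    (hl : p ^ l ∣ m - 1) (hl' : ¬ p ^ (l + 1) ∣ m - 1)
    (x0 y0 : AlgebraicClosure (ZMod p))
    (hx : x0 ^ p ^ l ≠ x0) (hy : y0 ^ p ^ l ≠ y0)
    (hsing : IsSingAt (toK p (fpoly p m)) x0 y0) :
    (∃ c : MvPolynomial (Fin 2) (AlgebraicClosure (ZMod p)), 0 < c.totalDegree ∧
        c ∣ homogeneousComponent (p ^ l) (shiftAt (toK p (fpoly p m)) x0 y0) ∧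
        c ∣ homogeneousComponent (p ^ l + 1) (shiftAt (toK p (fpoly p m)) x0 y0)) ↔
      y0 * (x0 + 1) ^ p ^ l * (y0 ^ (p ^ l - 1) - 1) ^ (p ^ l + 1) =
        x0 * (y0 + 1) ^ p ^ l * (x0 ^ (p ^ l - 1) - 1) ^ (p ^ l + 1) := by
  obtain ⟨hl0, s, hps, rfl⟩ := Nat.exists_eq_pow_mul_add_one hm1 hl hl'
  have hq : 2 ≤ p ^ l := (Fact.out : p.Prime).two_le.trans (Nat.le_self_pow hl0 p)
  have hs : s ≠ 0 := by rintro rfl; exact hps (dvd_zero p)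
  have hsK : (s : AlgebraicClosure (ZMod p)) ≠ 0 := by rwa [Ne, CharP.cast_eq_zero_iff _ p]
  obtain ⟨hWx, hWy, hWxy⟩ := hsing.toK_fpoly_pow_eq hm1 rfl
  rw [pow_mul, pow_mul] at hWx hWy hWxy
  obtain ⟨hx0, hx1⟩ := ne_zero_and_add_one_ne_zero_of_pow_ne_self p hx
  obtain ⟨hy0, hy1⟩ := ne_zero_and_add_one_ne_zero_of_pow_ne_self p hy
  have ha := coeff_shiftedPowDiff_mul_eq hq hs hWx
  have hk : (s : AlgebraicClosure (ZMod p)) * (x0 ^ p ^ l) ^ s ≠ 0 :=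
    mul_ne_zero hsK (pow_ne_zero _ (pow_ne_zero _ hx0))
  have ha0 : (shiftedPowDiff (p ^ l * s + 1) x0).coeff (p ^ l) ≠ 0 :=
    left_ne_zero_of_mul (ha ▸ mul_ne_zero hk (sub_ne_zero.mpr hx))
  rw [homogeneousComponent_shiftAt_toK_fpoly, homogeneousComponent_shiftAt_toK_fpoly,
    exists_common_factor_binomials_iff p l ha0,
    ← pow_sub_self_pow_succ_mul_eq_iff (by omega) hx0 hy0]
  refine pow_succ_mul_pow_eq_iff_of_mul_eq _ hk
    (mul_ne_zero (pow_ne_zero _ hx0) (pow_ne_zero _ hx1))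
    (mul_ne_zero (pow_ne_zero _ hy0) (pow_ne_zero _ hy1)) ha
    (coeff_succ_shiftedPowDiff_mul_eq hq hs hWx) ?_ ?_
  · rw [coeff_shiftedPowDiff_mul_eq hq hs hWy, hWxy]
  · rw [coeff_succ_shiftedPowDiff_mul_eq hq hs hWy, hWxy]

/-- Let `t = (x₀,y₀)` be a singular point of `f` with `x₀ ≠ y₀` and neither `x₀` nor `y₀`
in the subfield `F_{p^l}` of the algebraic closure `K`.  Then the homogeneous components
of degrees `p^l` and `p^l + 1` of `f(X+x₀, Y+y₀)` have a common nonconstant factor in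
`K[X,Y]` iff `y₀(x₀+1)^{p^l}(y₀^{p^l-1} - 1)^{p^l+1} = x₀(y₀+1)^{p^l}(x₀^{p^l-1} - 1)^{p^l+1}`. -/
theorem stmt15 (p : ℕ) [Fact p.Prime] (hp : Odd p)
    (m l : ℕ) (hm : 3 ≤ m) (hm1 : m ≡ 1 [MOD p])
    (hl : p ^ l ∣ m - 1) (hl' : ¬ p ^ (l + 1) ∣ m - 1)
    (x0 y0 : AlgebraicClosure (ZMod p)) (hxy : x0 ≠ y0)
    (hx : x0 ^ p ^ l ≠ x0) (hy : y0 ^ p ^ l ≠ y0)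
    (hsing : IsSingAt (toK p (fpoly p m)) x0 y0) :
    (∃ c : MvPolynomial (Fin 2) (AlgebraicClosure (ZMod p)), 0 < c.totalDegree ∧
        c ∣ homogeneousComponent (p ^ l) (shiftAt (toK p (fpoly p m)) x0 y0) ∧
        c ∣ homogeneousComponent (p ^ l + 1) (shiftAt (toK p (fpoly p m)) x0 y0)) ↔
      y0 * (x0 + 1) ^ p ^ l * (y0 ^ (p ^ l - 1) - 1) ^ (p ^ l + 1) =
        x0 * (y0 + 1) ^ p ^ l * (x0 ^ (p ^ l - 1) - 1) ^ (p ^ l + 1) :=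
  stmt15_general p m l hm1 hl hl' x0 y0 hx hy hsing
end

section
/- Let g ∈ F_p[x,y] be a nonconstant polynomial with no absolutely irreducible factor over F_p. Then over an algebraic closure K of F_p there is a factorization g = u·v with u, v ∈ K[x,y] nonconstant such that |deg(u) − deg(v)| ≤ deg(g)/3; in particular deg(u)·deg(v) ≥ (2/9)·deg(g)². -/
/-!
The Frobenius `x ↦ x ^ p` acts on the irreducible factors of `g` over `K`. If an irreducible
factor `q` were associated to its conjugate `q'`, a scalar multiple of `q` would be fixed by
Frobenius, hence defined over `F_p`, and would be an absolutely irreducible factor of `g`. So `q`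
and `q'` are non-associated irreducible factors, `q * q' ∣ g`, and `2 deg q ≤ deg g`. A multiset
of weights none of which exceeds half of the total contains a sub-multiset whose weight lies
between one and two thirds of the total; grouping the factors accordingly gives `u` and `v`.
-/

open MvPolynomial

namespace Multiset

theorem exists_le_sum_map_mem_middle_third_of_forall_three_mul_le {α : Type*} (f : α → ℕ)
    (S : ℕ) (M : Multiset α) (hsmall : ∀ a ∈ M, 3 * f a ≤ S) (hS : S ≤ 3 * (M.map f).sum) :
    ∃ N ≤ M, S ≤ 3 * (N.map f).sum ∧ 3 * (N.map f).sum ≤ 2 * S := by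
  induction M using Multiset.induction with
  | empty => exact ⟨0, le_rfl, by simpa using hS, by simp⟩
  | cons a M ih =>
    by_cases hM : S ≤ 3 * (M.map f).sum
    · obtain ⟨N, hNM, hN⟩ := ih (fun x hx => hsmall x (mem_cons_of_mem hx)) hM
      exact ⟨N, hNM.trans (le_cons_self M a), hN⟩
    · have ha := hsmall a (mem_cons_self a M)
      refine ⟨a ::ₘ M, le_rfl, ?_⟩
      simp only [map_cons, sum_cons] at hS ⊢
      omega

theorem exists_le_sum_map_mem_middle_third {α : Type*} (f : α → ℕ) (M : Multiset α)
    (hhalf : ∀ a ∈ M, 2 * f a ≤ (M.map f).sum) :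
    ∃ N ≤ M, (M.map f).sum ≤ 3 * (N.map f).sum ∧ 3 * (N.map f).sum ≤ 2 * (M.map f).sum := by
  by_cases hlarge : ∃ a ∈ M, (M.map f).sum < 3 * f a
  · obtain ⟨a, haM, ha⟩ := hlarge
    have ha_half := hhalf a haM
    exact ⟨{a}, singleton_le.mpr haM, by simp only [map_singleton, sum_singleton]; omega⟩
  · push Not at hlarge
    exact exists_le_sum_map_mem_middle_third_of_forall_three_mul_le f _ M hlarge (by omega)

end Multiset

theorem split_bounds_of_third_le_of_le_two_thirds {a b n : ℕ} (hn : 0 < n) (hab : a + b = n)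
    (h1 : n ≤ 3 * a) (h2 : 3 * a ≤ 2 * n) :
    0 < a ∧ 0 < b ∧ 3 * |(a : ℤ) - b| ≤ n ∧ 2 * (n : ℤ) ^ 2 ≤ 9 * ((a : ℤ) * b) := by
  subst hab
  refine ⟨by omega, by omega, ?_, ?_⟩
  · rcases abs_cases ((a : ℤ) - b) with ⟨h, -⟩ | ⟨h, -⟩ <;> rw [h] <;> omega
  · push_cast
    nlinarith [mul_nonneg (by omega : (0 : ℤ) ≤ 2 * a - b) (by omega : (0 : ℤ) ≤ 2 * b - a)]

namespace MvPolynomial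

variable {σ : Type*}

theorem totalDegree_map_of_injective {R S : Type*} [CommSemiring R] [CommSemiring S]
    {f : R →+* S} (hf : Function.Injective f) (q : MvPolynomial σ R) :
    (map f q).totalDegree = q.totalDegree := by
  simp only [totalDegree, support_map_of_injective q hf]

section Domain

variable {R : Type*} [CommRing R] [IsDomain R]

theorem _root_.Associated.totalDegree_eq {q r : MvPolynomial σ R} (h : Associated q r) :
    q.totalDegree = r.totalDegree := by
  obtain ⟨w, rfl⟩ := h
  rcases eq_or_ne q 0 with rfl | hq
  · simp
  rw [totalDegree_mul_of_isDomain hq w.ne_zero,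
    (isUnit_iff_totalDegree_of_isReduced.mp w.isUnit).2, add_zero]

theorem totalDegree_multiset_prod_of_isDomain {M : Multiset (MvPolynomial σ R)}
    (h : (0 : MvPolynomial σ R) ∉ M) : M.prod.totalDegree = (M.map totalDegree).sum := by
  induction M using Multiset.induction with
  | empty => simp
  | cons a M ih =>
    rw [Multiset.mem_cons, not_or] at h
    rw [Multiset.prod_cons,
      totalDegree_mul_of_isDomain (Ne.symm h.1) (Multiset.prod_ne_zero h.2),
      Multiset.map_cons, Multiset.sum_cons, ih h.2]

end Domain

theorem _root_.Irreducible.totalDegree_pos {K : Type*} [Field K] {q : MvPolynomial σ K}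
    (hq : Irreducible q) : 0 < q.totalDegree := by
  refine Nat.pos_of_ne_zero fun h => hq.not_isUnit ?_
  refine isUnit_iff_totalDegree_of_isReduced.mpr ⟨isUnit_iff_ne_zero.mpr fun h0 => ?_, h⟩
  exact hq.ne_zero (by rw [totalDegree_eq_zero_iff_eq_C.mp h, h0, C_0])

section Frobenius

variable (p : ℕ) [Fact p.Prime] {K : Type*} [Field K] [CharP K p]

theorem exists_associated_map_frobenius_eq [IsAlgClosed K] {q : MvPolynomial σ K}
    (h : Associated q (map (frobenius K p) q)) :
    ∃ f, Associated f q ∧ map (frobenius K p) f = f := by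
  obtain ⟨w, hw⟩ := h
  obtain ⟨c, hc, hwc⟩ := isUnit_iff_eq_C_of_isReduced.mp w.isUnit
  have hp1 : p - 1 ≠ 0 := by have := (Fact.out : p.Prime).two_le; omega
  obtain ⟨b, hb⟩ := IsAlgClosed.exists_pow_nat_eq c⁻¹ (n := p - 1) (Nat.pos_of_ne_zero hp1)
  have hb0 : b ≠ 0 := by
    rintro rfl
    rw [zero_pow hp1] at hb
    exact inv_ne_zero hc.ne_zero hb.symm
  -- `C b * q` is Frobenius-fixed exactly when `b ^ p * c = b`, i.e. `b ^ (p - 1) = c⁻¹`.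
  have hbc : b ^ p * c = b := by
    rw [← Nat.sub_add_cancel (Fact.out : p.Prime).one_le, pow_succ, hb, mul_right_comm,
      inv_mul_cancel₀ hc.ne_zero, one_mul]
  refine ⟨C b * q, associated_unit_mul_left q _ ((isUnit_iff_ne_zero.mpr hb0).map C), ?_⟩
  rw [map_mul, ← hw, hwc, map_C, frobenius_def, mul_left_comm, ← C_mul, hbc, mul_comm]

variable [Algebra (ZMod p) K]

theorem map_frobenius_map_algebraMap (g : MvPolynomial σ (ZMod p)) :
    map (frobenius K p) (map (algebraMap (ZMod p) K) g) = map (algebraMap (ZMod p) K) g := by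
  rw [map_map, Subsingleton.elim ((frobenius K p).comp _) (algebraMap (ZMod p) K)]

theorem mem_range_map_algebraMap_of_map_frobenius_eq {f : MvPolynomial σ K}
    (hf : map (frobenius K p) f = f) : f ∈ Set.range (map (algebraMap (ZMod p) K)) := by
  rw [mem_range_map_iff_coeffs_subset]
  intro a ha
  obtain ⟨m, -, rfl⟩ := mem_coeffs_iff.mp ha
  have hfix : coeff m f ^ p = coeff m f := by
    conv_rhs => rw [← hf, coeff_map, frobenius_def]
  obtain ⟨c, hc⟩ := ZMod.fieldRange_castHom_eq_bot p (K := K) ▸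
    (Subfield.mem_bot_iff_pow_eq_self K p).mpr hfix
  exact ⟨c, by rw [← hc, Subsingleton.elim (algebraMap (ZMod p) K) (ZMod.castHom dvd_rfl K)]⟩

theorem exists_map_eq_dvd_of_map_frobenius_eq {f : MvPolynomial σ K}
    (hf : map (frobenius K p) f = f) (hf0 : f ≠ 0) {g : MvPolynomial σ (ZMod p)}
    (hdvd : f ∣ map (algebraMap (ZMod p) K) g) :
    ∃ r, map (algebraMap (ZMod p) K) r = f ∧ r ∣ g := by
  obtain ⟨t, ht⟩ := hdvd
  have ht_fix : map (frobenius K p) t = t := by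
    apply mul_left_cancel₀ hf0
    conv_lhs => rw [← hf, ← map_mul, ← ht, map_frobenius_map_algebraMap]
    exact ht
  obtain ⟨r, rfl⟩ := mem_range_map_algebraMap_of_map_frobenius_eq p hf
  obtain ⟨s, rfl⟩ := mem_range_map_algebraMap_of_map_frobenius_eq p ht_fix
  exact ⟨r, rfl, s, map_injective _ (algebraMap (ZMod p) K).injective (by rw [map_mul, ht])⟩

theorem two_mul_totalDegree_le_of_irreducible_dvd [IsAlgClosed K] {g : MvPolynomial σ (ZMod p)}
    (hg : g ≠ 0)
    (habs : ¬ ∃ r : MvPolynomial σ (ZMod p), 0 < r.totalDegree ∧ r ∣ g ∧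
      Irreducible (map (algebraMap (ZMod p) K) r))
    {q : MvPolynomial σ K} (hq : Irreducible q) (hdvd : q ∣ map (algebraMap (ZMod p) K) g) :
    2 * q.totalDegree ≤ g.totalDegree := by
  have hinj := (algebraMap (ZMod p) K).injective
  set q' := map (frobenius K p) q
  have hq' : Irreducible q' :=
    (MulEquiv.irreducible_iff (mapEquiv σ (frobeniusEquiv K p)).toMulEquiv).mpr hq
  have hq'dvd : q' ∣ map (algebraMap (ZMod p) K) g :=
    map_frobenius_map_algebraMap (K := K) p g ▸ map_dvd _ hdvd
  by_cases hass : Associated q q'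
  · obtain ⟨f, hfq, hf⟩ := exists_associated_map_frobenius_eq p hass
    obtain ⟨r, rfl, hr⟩ := exists_map_eq_dvd_of_map_frobenius_eq p hf
      (hfq.ne_zero_iff.mpr hq.ne_zero) (hfq.dvd.trans hdvd)
    refine absurd ⟨r, ?_, hr, hfq.symm.irreducible hq⟩ habs
    rw [← totalDegree_map_of_injective hinj, hfq.totalDegree_eq]
    exact hq.totalDegree_pos
  · have hndvd : ¬ q ∣ q' := fun h => hass (hq.associated_of_dvd hq' h)
    have hmul : q * q' ∣ map (algebraMap (ZMod p) K) g :=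
      (hq.isRelPrime_iff_not_dvd.mpr hndvd).mul_dvd hdvd hq'dvd
    calc 2 * q.totalDegree = (q * q').totalDegree := by
          rw [totalDegree_mul_of_isDomain hq.ne_zero hq'.ne_zero,
            totalDegree_map_of_injective (frobenius K p).injective]
          ring
      _ ≤ (map (algebraMap (ZMod p) K) g).totalDegree :=
          totalDegree_le_of_dvd_of_isDomain hmul
            (by simpa using (map_injective _ hinj).ne hg)
      _ = g.totalDegree := totalDegree_map_of_injective hinj g

end Frobenius

end MvPolynomial

open UniqueFactorizationMonoid in
theorem stmt16_general (p : ℕ) [Fact p.Prime]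
    (g : MvPolynomial (Fin 2) (ZMod p)) (hg : 0 < g.totalDegree)
    (habs : ¬ ∃ q : MvPolynomial (Fin 2) (ZMod p), 0 < q.totalDegree ∧ q ∣ g ∧
      Irreducible (MvPolynomial.map (algebraMap (ZMod p) (AlgebraicClosure (ZMod p))) q)) :
    ∃ u v : MvPolynomial (Fin 2) (AlgebraicClosure (ZMod p)),
      MvPolynomial.map (algebraMap (ZMod p) (AlgebraicClosure (ZMod p))) g = u * v ∧
      0 < u.totalDegree ∧ 0 < v.totalDegree ∧
      3 * |(u.totalDegree : ℤ) - (v.totalDegree : ℤ)| ≤ (g.totalDegree : ℤ) ∧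
      2 * (g.totalDegree : ℤ) ^ 2 ≤ 9 * ((u.totalDegree : ℤ) * (v.totalDegree : ℤ)) := by
  have hinj := (algebraMap (ZMod p) (AlgebraicClosure (ZMod p))).injective
  set G := map (algebraMap (ZMod p) (AlgebraicClosure (ZMod p))) g
  have hg0 : g ≠ 0 := by rintro rfl; simp at hg
  have hG0 : G ≠ 0 := by simpa using (map_injective _ hinj).ne hg0
  have hfactors0 : ∀ M ≤ factors G, 0 ∉ M := fun M hM h =>
    not_irreducible_zero (irreducible_of_factor 0 (Multiset.mem_of_le hM h))
  have hdeg : ((factors G).map totalDegree).sum = g.totalDegree := by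
    rw [← totalDegree_multiset_prod_of_isDomain (hfactors0 _ le_rfl),
      (factors_prod hG0).totalDegree_eq, totalDegree_map_of_injective hinj]
  obtain ⟨N, hN, h1, h2⟩ := Multiset.exists_le_sum_map_mem_middle_third totalDegree (factors G)
    fun q hq => hdeg ▸ two_mul_totalDegree_le_of_irreducible_dvd p hg0 habs
      (irreducible_of_factor q hq) (dvd_of_mem_factors hq)
  obtain ⟨N', hNN'⟩ := Multiset.le_iff_exists_add.mp hN
  obtain ⟨w, hw⟩ := factors_prod hG0
  refine ⟨N.prod * w, N'.prod, by rw [← hw, hNN', Multiset.prod_add]; ring, ?_⟩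
  rw [(associated_mul_unit_left _ _ w.isUnit).totalDegree_eq,
    totalDegree_multiset_prod_of_isDomain (hfactors0 N hN),
    totalDegree_multiset_prod_of_isDomain (hfactors0 N' (hNN' ▸ Multiset.le_add_left _ _))]
  refine split_bounds_of_third_le_of_le_two_thirds hg ?_ (hdeg ▸ h1) (hdeg ▸ h2)
  rw [← hdeg, hNN', Multiset.map_add, Multiset.sum_add]

/-- Let `g ∈ F_p[x,y]` be nonconstant with no absolutely irreducible factor over `F_p`.
Then over the algebraic closure `K` of `F_p` there is a factorization `g = u·v` into
nonconstant polynomials with `|deg u - deg v| ≤ deg g / 3` (i.e. `3·|deg u - deg v| ≤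
deg g`); in particular `deg u · deg v ≥ (2/9)·deg g²` (i.e. `9·deg u·deg v ≥ 2·deg g²`). -/
theorem stmt16 (p : ℕ) [Fact p.Prime] (hp : Odd p)
    (g : MvPolynomial (Fin 2) (ZMod p)) (hg : 0 < g.totalDegree)
    (habs : ¬ ∃ q : MvPolynomial (Fin 2) (ZMod p), 0 < q.totalDegree ∧ q ∣ g ∧
      Irreducible (MvPolynomial.map (algebraMap (ZMod p) (AlgebraicClosure (ZMod p))) q)) :
    ∃ u v : MvPolynomial (Fin 2) (AlgebraicClosure (ZMod p)),
      MvPolynomial.map (algebraMap (ZMod p) (AlgebraicClosure (ZMod p))) g = u * v ∧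
      0 < u.totalDegree ∧ 0 < v.totalDegree ∧
      3 * |(u.totalDegree : ℤ) - (v.totalDegree : ℤ)| ≤ (g.totalDegree : ℤ) ∧
      2 * (g.totalDegree : ℤ) ^ 2 ≤ 9 * ((u.totalDegree : ℤ) * (v.totalDegree : ℤ)) :=
  stmt16_general p g hg habs
end
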